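/- arXiv:math-ph/0601007 — 4 statements merged into one kernel-verified Lean document; each statement's English description precedes it below -/
import Mathlib

section
/- For fixed positive integer n and fixed real u, as p → ∞, p^4 · C_p(n(1 + 1/(2p) + u/p)) → (π^2/16)(1 + 4u^2) n^2, where C_p(x) = (1/(2p+1))^2 - (∫_0^1 cos(π x t) t^{2p} dt)^2. -/
open Real Filter intervalIntegral

-- IBP step 1: cos integral
lemma ibp_cos (a : ℝ) (m : ℕ) :
    (∫ t in (0:ℝ)..1, Real.cos (a*t) * t^m) =
      Real.cos a/(m+1) + a/(m+1) * ∫ t in (0:ℝ)..1, Real.sin (a*t) * t^(m+1) := by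
  have hF : ∀ t : ℝ, HasDerivAt (fun s : ℝ => s^(m+1) * Real.cos (a*s))
      (((m:ℝ)+1) * (Real.cos (a*t) * t^m) - a * (Real.sin (a*t) * t^(m+1))) t := by
    intro t
    have h1 : HasDerivAt (fun s : ℝ => s^(m+1)) (((m:ℝ)+1) * t^m) t := by
      simpa using hasDerivAt_pow (m+1) t
    have h2 : HasDerivAt (fun s : ℝ => Real.cos (a*s)) (-Real.sin (a*t) * a) t := by
      simpa using ((hasDerivAt_id t).const_mul a).cos
    have : HasDerivAt (fun s : ℝ => s^(m+1) * Real.cos (a*s)) _ t := h1.mul h2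
    convert this using 1
    ring
  have hint1 : IntervalIntegrable (fun t : ℝ => Real.cos (a*t) * t^m)
      MeasureTheory.volume 0 1 := by
    apply Continuous.intervalIntegrable; continuity
  have hint2 : IntervalIntegrable (fun t : ℝ => Real.sin (a*t) * t^(m+1))
      MeasureTheory.volume 0 1 := by
    apply Continuous.intervalIntegrable; continuity
  have h := intervalIntegral.integral_eq_sub_of_hasDerivAt
      (f := fun s : ℝ => s^(m+1) * Real.cos (a*s)) (a := (0:ℝ)) (b := 1)
      (fun t _ => hF t)
      (by apply Continuous.intervalIntegrable; continuity)
  simp only [one_pow, one_mul, mul_one, zero_pow, Nat.succ_ne_zero, zero_mul, sub_zero] at h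
  rw [intervalIntegral.integral_sub (hint1.const_mul _) (hint2.const_mul _),
      intervalIntegral.integral_const_mul, intervalIntegral.integral_const_mul] at h
  have hm : ((m:ℝ)+1) ≠ 0 := by positivity
  field_simp at h ⊢
  rw [zero_pow (by omega), zero_mul, sub_zero] at h
  linarith

-- IBP step 2: sin integral
lemma ibp_sin (a : ℝ) (m : ℕ) :
    (∫ t in (0:ℝ)..1, Real.sin (a*t) * t^m) =
      Real.sin a/(m+1) - a/(m+1) * ∫ t in (0:ℝ)..1, Real.cos (a*t) * t^(m+1) := by
  have hF : ∀ t : ℝ, HasDerivAt (fun s : ℝ => s^(m+1) * Real.sin (a*s))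
      (((m:ℝ)+1) * (Real.sin (a*t) * t^m) + a * (Real.cos (a*t) * t^(m+1))) t := by
    intro t
    have h1 : HasDerivAt (fun s : ℝ => s^(m+1)) (((m:ℝ)+1) * t^m) t := by
      simpa using hasDerivAt_pow (m+1) t
    have h2 : HasDerivAt (fun s : ℝ => Real.sin (a*s)) (Real.cos (a*t) * a) t := by
      simpa using ((hasDerivAt_id t).const_mul a).sin
    have : HasDerivAt (fun s : ℝ => s^(m+1) * Real.sin (a*s)) _ t := h1.mul h2
    convert this using 1
    ring
  have hint1 : IntervalIntegrable (fun t : ℝ => Real.sin (a*t) * t^m)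
      MeasureTheory.volume 0 1 := by
    apply Continuous.intervalIntegrable; continuity
  have hint2 : IntervalIntegrable (fun t : ℝ => Real.cos (a*t) * t^(m+1))
      MeasureTheory.volume 0 1 := by
    apply Continuous.intervalIntegrable; continuity
  have h := intervalIntegral.integral_eq_sub_of_hasDerivAt
      (f := fun s : ℝ => s^(m+1) * Real.sin (a*s)) (a := (0:ℝ)) (b := 1)
      (fun t _ => hF t)
      (by apply Continuous.intervalIntegrable; continuity)
  simp only [one_pow, one_mul, mul_one, zero_pow, Nat.succ_ne_zero, zero_mul, sub_zero] at h
  rw [intervalIntegral.integral_add (hint1.const_mul _) (hint2.const_mul _),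
      intervalIntegral.integral_const_mul, intervalIntegral.integral_const_mul] at h
  have hm : ((m:ℝ)+1) ≠ 0 := by positivity
  field_simp at h ⊢
  rw [zero_pow (by omega), zero_mul, sub_zero] at h
  linarith

-- bound on sin integral
lemma sin_int_bound (a : ℝ) (m : ℕ) :
    |∫ t in (0:ℝ)..1, Real.sin (a*t) * t^m| ≤ 1/(m+1) := by
  have h0 : (0:ℝ) ≤ 1 := by norm_num
  have h1 : |∫ t in (0:ℝ)..1, Real.sin (a*t) * t^m|
      ≤ ∫ t in (0:ℝ)..1, |Real.sin (a*t)| * |t|^m := by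
    simpa [abs_mul, abs_pow] using intervalIntegral.norm_integral_le_integral_norm
      (f := fun t : ℝ => Real.sin (a*t) * t^m) (a := (0:ℝ)) (b := 1)
      (μ := MeasureTheory.volume) h0
  have h2 : (∫ t in (0:ℝ)..1, |Real.sin (a*t)| * |t|^m) ≤ ∫ t in (0:ℝ)..1, t^m := by
    apply intervalIntegral.integral_mono_on h0
    · apply Continuous.intervalIntegrable
      exact ((Real.continuous_sin.comp (continuous_const.mul continuous_id)).abs.mul
        (continuous_abs.pow m))
    · apply Continuous.intervalIntegrable; continuity
    · intro t ht
      calc |Real.sin (a*t)| * |t|^m ≤ 1 * |t|^m :=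
            mul_le_mul_of_nonneg_right (Real.abs_sin_le_one _)
              (pow_nonneg (abs_nonneg _) _)
        _ = t^m := by rw [one_mul, abs_of_nonneg ht.1]
  have h3 : (∫ t in (0:ℝ)..1, t^m) = 1/(m+1) := by
    rw [integral_pow]; simp
  linarith

-- p * sin(c/p) → c
lemma psin_lim (c : ℝ) :
    Tendsto (fun p : ℕ => (p:ℝ) * Real.sin (c/p)) atTop (nhds c) := by
  rcases eq_or_ne c 0 with rfl | hc
  · simpa using tendsto_const_nhds (x := (0:ℝ)) (f := atTop (α := ℕ))
  · have hslope : Tendsto (fun x : ℝ => Real.sin x / x) (nhdsWithin 0 {(0:ℝ)}ᶜ) (nhds 1) := by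
      have h := hasDerivAt_iff_tendsto_slope.mp (Real.hasDerivAt_sin 0)
      rw [Real.cos_zero] at h
      refine h.congr (fun x => ?_)
      simp [slope_def_field, div_eq_div_iff]
    have hcp : Tendsto (fun p : ℕ => c/(p:ℝ)) atTop (nhdsWithin 0 {(0:ℝ)}ᶜ) := by
      rw [tendsto_nhdsWithin_iff]
      constructor
      · exact tendsto_const_div_atTop_nhds_zero_nat c
      · filter_upwards [eventually_ge_atTop 1] with p hp
        have : (p:ℝ) ≠ 0 := by positivity
        simp [div_eq_zero_iff, hc, this]
    have h := (hslope.comp hcp).mul_const c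
    rw [one_mul] at h
    apply h.congr'
    filter_upwards [eventually_ge_atTop 1] with p hp
    have hp0 : (p:ℝ) ≠ 0 := by positivity
    simp only [Function.comp_apply]
    field_simp

-- p^2 (1 - cos(c/p)) → c^2/2
lemma pcos_lim (c : ℝ) :
    Tendsto (fun p : ℕ => (p:ℝ)^2 * (1 - Real.cos (c/p))) atTop (nhds (c^2/2)) := by
  have h := ((psin_lim (c/2)).mul (psin_lim (c/2))).const_mul 2
  have hv : (2:ℝ) * (c/2 * (c/2)) = c^2/2 := by ring
  rw [hv] at h
  refine h.congr (fun p => ?_)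
  have hs := Real.sin_sq_eq_half_sub (x := c/2/(p:ℝ))
  have harg : 2 * (c/2/(p:ℝ)) = c/(p:ℝ) := by ring
  rw [harg] at hs
  have harg2 : c/2/(p:ℝ) = c/2/(p:ℝ) := rfl
  nlinarith [hs]

lemma base_frac (k : ℝ) :
    Tendsto (fun p : ℕ => 1/(2 + k/(p:ℝ))) atTop (nhds (1/2)) := by
  have h2 : Tendsto (fun p : ℕ => (2:ℝ) + k/(p:ℝ)) atTop (nhds 2) := by
    simpa using (tendsto_const_div_atTop_nhds_zero_nat k).const_add 2
  simpa [one_div] using h2.inv₀ two_ne_zero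

lemma frac1 : Tendsto (fun p : ℕ => (p:ℝ)/(2*(p:ℝ)+1)) atTop (nhds (1/2)) := by
  refine (base_frac 1).congr' ?_
  filter_upwards [eventually_ge_atTop 1] with p hp
  have hp0 : (p:ℝ) ≠ 0 := by positivity
  field_simp

lemma frac2 : Tendsto (fun p : ℕ => (p:ℝ)^2/((2*(p:ℝ)+1)*(2*(p:ℝ)+2)))
    atTop (nhds (1/4)) := by
  have h := (base_frac 1).mul (base_frac 2)
  have hv : (1/2 : ℝ) * (1/2) = 1/4 := by norm_num
  rw [hv] at h
  refine h.congr' ?_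
  filter_upwards [eventually_ge_atTop 1] with p hp
  have hp0 : (p:ℝ) ≠ 0 := by positivity
  have h1 : (2:ℝ) + 1/(p:ℝ) ≠ 0 := by positivity
  have h2 : (2:ℝ) + 2/(p:ℝ) ≠ 0 := by positivity
  have h3 : 2*(p:ℝ)+1 ≠ 0 := by positivity
  have h4 : 2*(p:ℝ)+2 ≠ 0 := by positivity
  field_simp

lemma frac3 : Tendsto (fun p : ℕ => (p:ℝ)^3/((2*(p:ℝ)+1)*(2*(p:ℝ)+2)*(2*(p:ℝ)+3)))
    atTop (nhds (1/8)) := by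
  have h := ((base_frac 1).mul (base_frac 2)).mul (base_frac 3)
  have hv : ((1/2 : ℝ) * (1/2)) * (1/2) = 1/8 := by norm_num
  rw [hv] at h
  refine h.congr' ?_
  filter_upwards [eventually_ge_atTop 1] with p hp
  have hp0 : (p:ℝ) ≠ 0 := by positivity
  have h1 : (2:ℝ) + 1/(p:ℝ) ≠ 0 := by positivity
  have h2 : (2:ℝ) + 2/(p:ℝ) ≠ 0 := by positivity
  have h2' : (2:ℝ) + 3/(p:ℝ) ≠ 0 := by positivity
  have h3 : 2*(p:ℝ)+1 ≠ 0 := by positivity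
  have h4 : 2*(p:ℝ)+2 ≠ 0 := by positivity
  have h5 : 2*(p:ℝ)+3 ≠ 0 := by positivity
  field_simp

lemma inv4_lim : Tendsto (fun p : ℕ => 1/(2*(p:ℝ)+4)) atTop (nhds 0) := by
  have h : Tendsto (fun p : ℕ => 2*(p:ℝ)+4) atTop atTop :=
    tendsto_atTop_add_const_right _ 4
      (tendsto_natCast_atTop_atTop.const_mul_atTop two_pos)
  simpa [one_div, Pi.inv_def] using h.inv_tendsto_atTop

-- the (2p)-th power cosine integral expansion
lemma expand_int (a : ℝ) (p : ℕ) :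
    (∫ t in (0:ℝ)..1, Real.cos (a*t) * t^(2*p)) =
      Real.cos a/(2*(p:ℝ)+1) + a * Real.sin a/((2*(p:ℝ)+1)*(2*(p:ℝ)+2))
      - a^2 * Real.cos a/((2*(p:ℝ)+1)*(2*(p:ℝ)+2)*(2*(p:ℝ)+3))
      - a^3/((2*(p:ℝ)+1)*(2*(p:ℝ)+2)*(2*(p:ℝ)+3)) *
          ∫ t in (0:ℝ)..1, Real.sin (a*t) * t^(2*p+3) := by
  have e1 := ibp_cos a (2*p)
  have e2 := ibp_sin a (2*p+1)
  have e3 := ibp_cos a (2*p+2)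
  rw [show 2*p+1+1 = 2*p+2 from by omega] at e2
  rw [show 2*p+2+1 = 2*p+3 from by omega] at e3
  rw [e2, e3] at e1
  push_cast at e1 ⊢
  rw [e1]
  have h1 : 2*(p:ℝ)+1 ≠ 0 := by positivity
  have h2 : 2*(p:ℝ)+2 ≠ 0 := by positivity
  have h3 : 2*(p:ℝ)+3 ≠ 0 := by positivity
  field_simp
  ring

noncomputable def aa (n : ℕ) (u : ℝ) (p : ℕ) : ℝ :=
  π * ((n : ℝ) * (1 + 1 / (2 * (p:ℝ)) + u / (p:ℝ)))

noncomputable def cc (n : ℕ) (u : ℝ) : ℝ := π * (n:ℝ) * (1 + 2*u) / 2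

noncomputable def II (n : ℕ) (u : ℝ) (p : ℕ) : ℝ :=
  ∫ t in (0:ℝ)..1, Real.cos (aa n u p * t) * t^(2*p)

noncomputable def SS (n : ℕ) (u : ℝ) (p : ℕ) : ℝ :=
  ∫ t in (0:ℝ)..1, Real.sin (aa n u p * t) * t^(2*p+3)

noncomputable def DD (p : ℕ) : ℝ := 1/(2*(p:ℝ)+1)

noncomputable def JJ (n : ℕ) (u : ℝ) (p : ℕ) : ℝ := (-1:ℝ)^n * II n u p

lemma a_eq (n : ℕ) (u : ℝ) (p : ℕ) : aa n u p = π*(n:ℝ) + cc n u/(p:ℝ) := by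
  rcases eq_or_ne (p:ℝ) 0 with h | h
  · simp [aa, cc, h]
  · simp only [aa, cc]
    field_simp
    ring

lemma cos_shift (n : ℕ) (x : ℝ) :
    Real.cos (π*(n:ℝ) + x) = (-1:ℝ)^n * Real.cos x := by
  have h1 : Real.cos (π*(n:ℝ)) = (-1:ℝ)^n := by
    rw [mul_comm]; simpa using Real.cos_nat_mul_pi_sub 0 n
  have h2 : Real.sin (π*(n:ℝ)) = 0 := by
    rw [mul_comm]; exact Real.sin_nat_mul_pi n
  rw [Real.cos_add, h1, h2]; ring

lemma sin_shift (n : ℕ) (x : ℝ) :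
    Real.sin (π*(n:ℝ) + x) = (-1:ℝ)^n * Real.sin x := by
  have h1 : Real.cos (π*(n:ℝ)) = (-1:ℝ)^n := by
    rw [mul_comm]; simpa using Real.cos_nat_mul_pi_sub 0 n
  have h2 : Real.sin (π*(n:ℝ)) = 0 := by
    rw [mul_comm]; exact Real.sin_nat_mul_pi n
  rw [Real.sin_add, h1, h2]; ring

lemma neg_one_sq_pow (n : ℕ) : ((-1:ℝ)^n)^2 = 1 := by
  rw [← pow_mul, mul_comm, pow_mul]; norm_num

lemma J_formula (n : ℕ) (u : ℝ) (p : ℕ) :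
    JJ n u p = Real.cos (cc n u/(p:ℝ))/(2*(p:ℝ)+1)
      + aa n u p * Real.sin (cc n u/(p:ℝ))/((2*(p:ℝ)+1)*(2*(p:ℝ)+2))
      - (aa n u p)^2 * Real.cos (cc n u/(p:ℝ))/((2*(p:ℝ)+1)*(2*(p:ℝ)+2)*(2*(p:ℝ)+3))
      - (-1:ℝ)^n * (aa n u p)^3 * SS n u p/((2*(p:ℝ)+1)*(2*(p:ℝ)+2)*(2*(p:ℝ)+3)) := by
  have h1 := neg_one_sq_pow n
  simp only [JJ, II, SS]
  rw [expand_int (aa n u p) p]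
  rw [a_eq n u p, cos_shift, sin_shift]
  rw [← a_eq n u p]
  linear_combination (Real.cos (cc n u/(p:ℝ))/(2*(p:ℝ)+1)
      + aa n u p * Real.sin (cc n u/(p:ℝ))/((2*(p:ℝ)+1)*(2*(p:ℝ)+2))
      - (aa n u p)^2 * Real.cos (cc n u/(p:ℝ))/((2*(p:ℝ)+1)*(2*(p:ℝ)+2)*(2*(p:ℝ)+3))) * h1

lemma aa_lim (n : ℕ) (u : ℝ) :
    Tendsto (fun p : ℕ => aa n u p) atTop (nhds (π*(n:ℝ))) := by
  have h : Tendsto (fun p : ℕ => π*(n:ℝ) + cc n u/(p:ℝ)) atTop (nhds (π*(n:ℝ))) := by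
    simpa using (tendsto_const_div_atTop_nhds_zero_nat (cc n u)).const_add (π*(n:ℝ))
  exact h.congr (fun p => (a_eq n u p).symm)

lemma cosc_lim (n : ℕ) (u : ℝ) :
    Tendsto (fun p : ℕ => Real.cos (cc n u/(p:ℝ))) atTop (nhds 1) := by
  exact (Real.continuous_cos.tendsto' 0 1 Real.cos_zero).comp
    (tendsto_const_div_atTop_nhds_zero_nat (cc n u))

lemma SS_bound (n : ℕ) (u : ℝ) (p : ℕ) : |SS n u p| ≤ 1/(2*(p:ℝ)+4) := by
  have h := sin_int_bound (aa n u p) (2*p+3)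
  simp only [SS]
  calc |∫ t in (0:ℝ)..1, Real.sin (aa n u p*t) * t^(2*p+3)| ≤ 1/((2*p+3:ℕ)+1) := h
    _ = 1/(2*(p:ℝ)+4) := by push_cast; ring_nf

lemma f1_lim (n : ℕ) (u : ℝ) :
    Tendsto (fun p : ℕ => (p:ℝ)^3 * (DD p - JJ n u p)) atTop
      (nhds (π^2/16 * (1 + 4*u^2) * (n:ℝ)^2)) := by
  have hA : Tendsto (fun p : ℕ =>
      ((p:ℝ)^2 * (1 - Real.cos (cc n u/(p:ℝ)))) * ((p:ℝ)/(2*(p:ℝ)+1)))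
      atTop (nhds ((cc n u)^2/2 * (1/2))) := (pcos_lim (cc n u)).mul frac1
  have hB : Tendsto (fun p : ℕ =>
      aa n u p * ((p:ℝ) * Real.sin (cc n u/(p:ℝ))) *
        ((p:ℝ)^2/((2*(p:ℝ)+1)*(2*(p:ℝ)+2))))
      atTop (nhds (π*(n:ℝ) * cc n u * (1/4))) :=
    ((aa_lim n u).mul (psin_lim (cc n u))).mul frac2
  have hC : Tendsto (fun p : ℕ =>
      (aa n u p)^2 * Real.cos (cc n u/(p:ℝ)) *
        ((p:ℝ)^3/((2*(p:ℝ)+1)*(2*(p:ℝ)+2)*(2*(p:ℝ)+3))))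
      atTop (nhds ((π*(n:ℝ))^2 * 1 * (1/8))) :=
    (((aa_lim n u).pow 2).mul (cosc_lim n u)).mul frac3
  have hE : Tendsto (fun p : ℕ =>
      (-1:ℝ)^n * (aa n u p)^3 * SS n u p *
        ((p:ℝ)^3/((2*(p:ℝ)+1)*(2*(p:ℝ)+2)*(2*(p:ℝ)+3))))
      atTop (nhds 0) := by
    have hg : Tendsto (fun p : ℕ =>
        |aa n u p|^3 * (1/(2*(p:ℝ)+4)) *
          ((p:ℝ)^3/((2*(p:ℝ)+1)*(2*(p:ℝ)+2)*(2*(p:ℝ)+3))))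
        atTop (nhds (|π*(n:ℝ)|^3 * 0 * (1/8))) :=
      (((aa_lim n u).abs.pow 3).mul inv4_lim).mul frac3
    rw [show |π*(n:ℝ)|^3 * 0 * (1/8 : ℝ) = 0 from by ring] at hg
    refine squeeze_zero_norm (fun p => ?_) hg
    have hfr : 0 ≤ (p:ℝ)^3/((2*(p:ℝ)+1)*(2*(p:ℝ)+2)*(2*(p:ℝ)+3)) := by positivity
    rw [Real.norm_eq_abs, abs_mul, abs_mul, abs_mul, abs_pow, abs_pow, abs_neg, abs_one,
        one_pow, one_mul, abs_of_nonneg hfr]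
    have hS := SS_bound n u p
    have h4 : (0:ℝ) < 1/(2*(p:ℝ)+4) := by positivity
    have : |aa n u p|^3 * |SS n u p| ≤ |aa n u p|^3 * (1/(2*(p:ℝ)+4)) :=
      mul_le_mul_of_nonneg_left hS (by positivity)
    exact mul_le_mul_of_nonneg_right this hfr
  have h := ((hA.sub hB).add hC).add hE
  rw [show (cc n u)^2/2 * (1/2) - π*(n:ℝ) * cc n u * (1/4) + (π*(n:ℝ))^2 * 1 * (1/8) + 0
      = π^2/16 * (1 + 4*u^2) * (n:ℝ)^2 from by simp only [cc]; ring] at h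
  refine h.congr (fun p => ?_)
  rw [J_formula n u p]
  simp only [DD]
  ring

lemma f2_lim (n : ℕ) (u : ℝ) :
    Tendsto (fun p : ℕ => (p:ℝ) * (DD p + JJ n u p)) atTop (nhds 1) := by
  have hp2 : Tendsto (fun p : ℕ => 1/(p:ℝ)^2) atTop (nhds 0) := by
    have := (tendsto_one_div_atTop_nhds_zero_nat (𝕜 := ℝ)).mul (tendsto_one_div_atTop_nhds_zero_nat (𝕜 := ℝ))
    rw [show (0:ℝ)*0 = 0 from by ring] at this
    refine this.congr (fun p => ?_)
    ring
  have h := (frac1.const_mul 2).sub (hp2.mul (f1_lim n u))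
  rw [show (2:ℝ)*(1/2) - 0*(π^2/16 * (1 + 4*u^2) * (n:ℝ)^2) = 1 from by ring] at h
  refine h.congr' ?_
  filter_upwards [eventually_ge_atTop 1] with p hp
  have hp0 : (p:ℝ) ≠ 0 := by positivity
  have hd : 2*(p:ℝ)+1 ≠ 0 := by positivity
  simp only [DD]
  field_simp
  ring

theorem Cp_peak_asymptotic (n : ℕ) (hn : 1 ≤ n) (u : ℝ) :
    Tendsto (fun p : ℕ =>
      (p : ℝ) ^ 4 *
        ((1 / (2 * (p : ℝ) + 1)) ^ 2 -
          (∫ t in (0 : ℝ)..1,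
            Real.cos (π * ((n : ℝ) * (1 + 1 / (2 * p) + u / p)) * t) * t ^ (2 * p)) ^ 2))
      atTop (nhds (π ^ 2 / 16 * (1 + 4 * u ^ 2) * (n : ℝ) ^ 2)) := by
  have h := (f1_lim n u).mul (f2_lim n u)
  rw [mul_one] at h
  refine h.congr (fun p => ?_)
  show (p:ℝ)^3*(DD p - JJ n u p) * ((p:ℝ)*(DD p + JJ n u p))
      = (p:ℝ)^4 * (DD p^2 - II n u p^2)
  have hJ2 : JJ n u p^2 = II n u p^2 := by
    simp only [JJ, mul_pow, neg_one_sq_pow n, one_mul]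
  linear_combination (-(p:ℝ)^4) * hJ2
end

section
/- For fixed positive integer n and fixed real u, as p → ∞, p^5 · A_p(n(1 + 1/(2p) + u/p)) → (π^2/32) n^2, where A_p(x) = g_{2,p} C_p(x) - g_{1,p} g_{4,p}(x)^2 with g_{1,p} = 1/(2p+1), g_{2,p} = 1/(2p+3), g_{3,p}(x) = ∫_0^1 cos(πxt) t^{2p} dt, g_{4,p}(x) = ∫_0^1 sin(πxt) t^{2p+1} dt, and C_p(x) = g_{1,p}^2 - g_{3,p}(x)^2. -/
open Real Filter intervalIntegral Topology

lemma step_cos (b : ℝ) (k : ℕ) :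
    (∫ t in (0:ℝ)..1, Real.cos (b*t) * t^k)
      = Real.cos b / (k+1) + b/(k+1) * ∫ t in (0:ℝ)..1, Real.sin (b*t) * t^(k+1) := by
  have hk : ((k:ℝ)+1) ≠ 0 := by positivity
  have hu : ∀ t : ℝ, t ∈ Set.uIcc (0:ℝ) 1 →
      HasDerivAt (fun t : ℝ => Real.cos (b*t)) (-Real.sin (b*t) * b) t := by
    intro t _
    simpa using ((hasDerivAt_id t).const_mul b).cos
  have hv : ∀ t : ℝ, t ∈ Set.uIcc (0:ℝ) 1 →
      HasDerivAt (fun t : ℝ => t^(k+1)/((k:ℝ)+1)) (t^k) t := by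
    intro t _
    have h := (hasDerivAt_pow (k+1) t).div_const ((k:ℝ)+1)
    convert h using 1
    push_cast
    rfl
    rfl
    push_cast
    field_simp
  have hI1 : IntervalIntegrable (fun t : ℝ => -Real.sin (b*t) * b)
      MeasureTheory.volume 0 1 := (by continuity : Continuous fun t : ℝ => -Real.sin (b*t) * b).intervalIntegrable _ _
  have hI2 : IntervalIntegrable (fun t : ℝ => t^k) MeasureTheory.volume 0 1 :=
    (continuous_pow k).intervalIntegrable _ _
  have h := intervalIntegral.integral_mul_deriv_eq_deriv_mul hu hv hI1 hI2
  rw [h]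
  have : (∫ t in (0:ℝ)..1, -Real.sin (b*t) * b * (t^(k+1)/((k:ℝ)+1)))
      = (-(b/((k:ℝ)+1))) * ∫ t in (0:ℝ)..1, Real.sin (b*t) * t^(k+1) := by
    rw [← intervalIntegral.integral_const_mul]
    apply intervalIntegral.integral_congr
    intro t _
    ring
  rw [this]
  simp
  ring

lemma step_sin (b : ℝ) (k : ℕ) :
    (∫ t in (0:ℝ)..1, Real.sin (b*t) * t^k)
      = Real.sin b / (k+1) - b/(k+1) * ∫ t in (0:ℝ)..1, Real.cos (b*t) * t^(k+1) := by
  have hk : ((k:ℝ)+1) ≠ 0 := by positivity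
  have hu : ∀ t : ℝ, t ∈ Set.uIcc (0:ℝ) 1 →
      HasDerivAt (fun t : ℝ => Real.sin (b*t)) (Real.cos (b*t) * b) t := by
    intro t _
    simpa using ((hasDerivAt_id t).const_mul b).sin
  have hv : ∀ t : ℝ, t ∈ Set.uIcc (0:ℝ) 1 →
      HasDerivAt (fun t : ℝ => t^(k+1)/((k:ℝ)+1)) (t^k) t := by
    intro t _
    have h := (hasDerivAt_pow (k+1) t).div_const ((k:ℝ)+1)
    convert h using 1
    push_cast
    rfl
    rfl
    push_cast
    field_simp
  have hI1 : IntervalIntegrable (fun t : ℝ => Real.cos (b*t) * b)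
      MeasureTheory.volume 0 1 := (by continuity : Continuous fun t : ℝ => Real.cos (b*t) * b).intervalIntegrable _ _
  have hI2 : IntervalIntegrable (fun t : ℝ => t^k) MeasureTheory.volume 0 1 :=
    (continuous_pow k).intervalIntegrable _ _
  have h := intervalIntegral.integral_mul_deriv_eq_deriv_mul hu hv hI1 hI2
  rw [h]
  have : (∫ t in (0:ℝ)..1, Real.cos (b*t) * b * (t^(k+1)/((k:ℝ)+1)))
      = (b/((k:ℝ)+1)) * ∫ t in (0:ℝ)..1, Real.cos (b*t) * t^(k+1) := by
    rw [← intervalIntegral.integral_const_mul]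
    apply intervalIntegral.integral_congr
    intro t _
    ring
  rw [this]
  simp
  ring

lemma expand_cos (b : ℝ) (k : ℕ) :
    (∫ t in (0:ℝ)..1, Real.cos (b*t) * t^k)
      = Real.cos b/((k:ℝ)+1) + b*Real.sin b/(((k:ℝ)+1)*((k:ℝ)+2))
        - b^2*Real.cos b/(((k:ℝ)+1)*((k:ℝ)+2)*((k:ℝ)+3))
        - b^3/(((k:ℝ)+1)*((k:ℝ)+2)*((k:ℝ)+3)) * ∫ t in (0:ℝ)..1, Real.sin (b*t) * t^(k+3) := by
  rw [step_cos b k, step_sin b (k+1), step_cos b (k+2)]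
  push_cast
  have h1 : ((k:ℝ)+1) ≠ 0 := by positivity
  have h2 : ((k:ℝ)+2) ≠ 0 := by positivity
  have h3 : ((k:ℝ)+3) ≠ 0 := by positivity
  have : k + 1 + 1 + 1 = k + 3 := by ring
  rw [this]
  field_simp
  ring

lemma expand_sin (b : ℝ) (k : ℕ) :
    (∫ t in (0:ℝ)..1, Real.sin (b*t) * t^k)
      = Real.sin b/((k:ℝ)+1) - b*Real.cos b/(((k:ℝ)+1)*((k:ℝ)+2))
        - b^2*Real.sin b/(((k:ℝ)+1)*((k:ℝ)+2)*((k:ℝ)+3))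
        + b^3/(((k:ℝ)+1)*((k:ℝ)+2)*((k:ℝ)+3)) * ∫ t in (0:ℝ)..1, Real.cos (b*t) * t^(k+3) := by
  rw [step_sin b k, step_cos b (k+1), step_sin b (k+2)]
  push_cast
  have h1 : ((k:ℝ)+1) ≠ 0 := by positivity
  have h2 : ((k:ℝ)+2) ≠ 0 := by positivity
  have h3 : ((k:ℝ)+3) ≠ 0 := by positivity
  have : k + 1 + 1 + 1 = k + 3 := by ring
  rw [this]
  field_simp
  ring

lemma bound_sin (b : ℝ) (k : ℕ) :
    |∫ t in (0:ℝ)..1, Real.sin (b*t) * t^k| ≤ 1/((k:ℝ)+1) := by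
  have hpow : (∫ t in (0:ℝ)..1, t^k) = 1/((k:ℝ)+1) := by
    rw [integral_pow]; simp
  have hIf : IntervalIntegrable (fun t : ℝ => Real.sin (b*t) * t^k) MeasureTheory.volume 0 1 :=
    (by continuity : Continuous fun t : ℝ => Real.sin (b*t) * t^k).intervalIntegrable _ _
  have hIg : IntervalIntegrable (fun t : ℝ => t^k) MeasureTheory.volume 0 1 :=
    (continuous_pow k).intervalIntegrable _ _
  have hIng : IntervalIntegrable (fun t : ℝ => -t^k) MeasureTheory.volume 0 1 := hIg.neg
  rw [abs_le]
  constructor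
  · have : (∫ t in (0:ℝ)..1, -t^k) ≤ ∫ t in (0:ℝ)..1, Real.sin (b*t) * t^k := by
      apply intervalIntegral.integral_mono_on (by norm_num) hIng hIf
      intro t ht
      have h1 : (0:ℝ) ≤ t^k := pow_nonneg ht.1 k
      nlinarith [Real.neg_one_le_sin (b*t)]
    have hneg : (∫ t in (0:ℝ)..1, -t^k) = -(1/((k:ℝ)+1)) := by
      rw [intervalIntegral.integral_neg, hpow]
    linarith
  · have : (∫ t in (0:ℝ)..1, Real.sin (b*t) * t^k) ≤ ∫ t in (0:ℝ)..1, t^k := by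
      apply intervalIntegral.integral_mono_on (by norm_num) hIf hIg
      intro t ht
      have h1 : (0:ℝ) ≤ t^k := pow_nonneg ht.1 k
      nlinarith [Real.sin_le_one (b*t)]
    linarith [hpow ▸ this]

lemma bound_cos (b : ℝ) (k : ℕ) :
    |∫ t in (0:ℝ)..1, Real.cos (b*t) * t^k| ≤ 1/((k:ℝ)+1) := by
  have hpow : (∫ t in (0:ℝ)..1, t^k) = 1/((k:ℝ)+1) := by
    rw [integral_pow]; simp
  have hIf : IntervalIntegrable (fun t : ℝ => Real.cos (b*t) * t^k) MeasureTheory.volume 0 1 :=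
    (by continuity : Continuous fun t : ℝ => Real.cos (b*t) * t^k).intervalIntegrable _ _
  have hIg : IntervalIntegrable (fun t : ℝ => t^k) MeasureTheory.volume 0 1 :=
    (continuous_pow k).intervalIntegrable _ _
  have hIng : IntervalIntegrable (fun t : ℝ => -t^k) MeasureTheory.volume 0 1 := hIg.neg
  rw [abs_le]
  constructor
  · have : (∫ t in (0:ℝ)..1, -t^k) ≤ ∫ t in (0:ℝ)..1, Real.cos (b*t) * t^k := by
      apply intervalIntegral.integral_mono_on (by norm_num) hIng hIf
      intro t ht
      have h1 : (0:ℝ) ≤ t^k := pow_nonneg ht.1 k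
      nlinarith [Real.neg_one_le_cos (b*t)]
    have hneg : (∫ t in (0:ℝ)..1, -t^k) = -(1/((k:ℝ)+1)) := by
      rw [intervalIntegral.integral_neg, hpow]
    linarith
  · have : (∫ t in (0:ℝ)..1, Real.cos (b*t) * t^k) ≤ ∫ t in (0:ℝ)..1, t^k := by
      apply intervalIntegral.integral_mono_on (by norm_num) hIf hIg
      intro t ht
      have h1 : (0:ℝ) ≤ t^k := pow_nonneg ht.1 k
      nlinarith [Real.cos_le_one (b*t)]
    linarith [hpow ▸ this]

noncomputable def N4 (q a c s : ℝ) : ℝ :=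
    16*(133 - 132*s^2 - 133*c^2 - 2*a*c*s + a^2*s^2 + a^2*c^2)
  + 8*q*(516 - 502*s^2 - 516*c^2 - 28*a*c*s + 8*a^2*s^2 + 14*a^2*c^2)
  + 4*q^2*(1108 - 1035*s^2 - 1108*c^2 - 146*a*c*s + 13*a^2*s^2 + 73*a^2*c^2 + 6*a^3*c*s - a^4*s^2 - a^4*c^2)
  + 2*q^3*(1248 - 1080*s^2 - 1248*c^2 - 336*a*c*s - 30*a^2*s^2 + 168*a^2*c^2 + 42*a^3*c*s - 4*a^4*s^2 - 8*a^4*c^2)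
  + q^4*(576 - 432*s^2 - 576*c^2 - 288*a*c*s - 72*a^2*s^2 + 144*a^2*c^2 + 72*a^3*c*s - 3*a^4*s^2 - 16*a^4*c^2)

lemma key_alg (P a c s : ℝ) (hP : 0 < P) :
    P^5 * (1/(2*P+3) * ((1/(2*P+1))^2 -
        (c/(2*P+1) + a*s/((2*P+1)*(2*P+2)) - a^2*c/((2*P+1)*(2*P+2)*(2*P+3)))^2)
      - 1/(2*P+1) * (s/(2*P+2) - a*c/((2*P+2)*(2*P+3)) - a^2*s/((2*P+2)*(2*P+3)*(2*P+4)))^2)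
  = (1 - s^2 - c^2) * (((2*P)^6 + 18*(2*P)^5) * P^5
        / ((2*P+1)^2*(2*P+2)^2*(2*P+3)^3*(2*P+4)^2))
    + N4 (1/P) a c s
        / ((2+1/P)^2*(2+2*(1/P))^2*(2+3*(1/P))^3*(2+4*(1/P))^2) := by
  have hP0 : P ≠ 0 := ne_of_gt hP
  have h1 : 2*P+1 ≠ 0 := by positivity
  have h2 : 2*P+2 ≠ 0 := by positivity
  have h3 : 2*P+3 ≠ 0 := by positivity
  have h4 : 2*P+4 ≠ 0 := by positivity
  have e1 : 2+1/P = (2*P+1)/P := by field_simp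
  have e2 : 2+2*(1/P) = (2*P+2)/P := by field_simp
  have e3 : 2+3*(1/P) = (2*P+3)/P := by field_simp
  have e4 : 2+4*(1/P) = (2*P+4)/P := by field_simp
  rw [e1, e2, e3, e4]
  unfold N4
  field_simp
  ring

noncomputable def bb (n : ℕ) (u : ℝ) (p : ℕ) : ℝ := π * ((n:ℝ) * (1 + 1/(2*(p:ℝ)) + u/(p:ℝ)))

noncomputable def UU (n : ℕ) (u : ℝ) (p : ℕ) : ℝ :=
  Real.cos (bb n u p)/(2*(p:ℝ)+1) + (bb n u p)*Real.sin (bb n u p)/((2*(p:ℝ)+1)*(2*(p:ℝ)+2))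
    - (bb n u p)^2*Real.cos (bb n u p)/((2*(p:ℝ)+1)*(2*(p:ℝ)+2)*(2*(p:ℝ)+3))

noncomputable def VV (n : ℕ) (u : ℝ) (p : ℕ) : ℝ :=
  Real.sin (bb n u p)/(2*(p:ℝ)+2) - (bb n u p)*Real.cos (bb n u p)/((2*(p:ℝ)+2)*(2*(p:ℝ)+3))
    - (bb n u p)^2*Real.sin (bb n u p)/((2*(p:ℝ)+2)*(2*(p:ℝ)+3)*(2*(p:ℝ)+4))

noncomputable def TT3 (n : ℕ) (u : ℝ) (p : ℕ) : ℝ :=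
  -((bb n u p)^3)/((2*(p:ℝ)+1)*(2*(p:ℝ)+2)*(2*(p:ℝ)+3))
    * ∫ t in (0:ℝ)..1, Real.sin (bb n u p * t) * t^(2*p+3)

noncomputable def TT4 (n : ℕ) (u : ℝ) (p : ℕ) : ℝ :=
  (bb n u p)^3/((2*(p:ℝ)+2)*(2*(p:ℝ)+3)*(2*(p:ℝ)+4))
    * ∫ t in (0:ℝ)..1, Real.cos (bb n u p * t) * t^(2*p+1+3)

noncomputable def Gm (n : ℕ) (u : ℝ) (p : ℕ) : ℝ :=
  N4 (1/(p:ℝ)) (bb n u p) (Real.cos (bb n u p)) (Real.sin (bb n u p))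
    / ((2+1/(p:ℝ))^2*(2+2*(1/(p:ℝ)))^2*(2+3*(1/(p:ℝ)))^3*(2+4*(1/(p:ℝ)))^2)

noncomputable def Rem (n : ℕ) (u : ℝ) (p : ℕ) : ℝ :=
  (p:ℝ)^5 * (-(1/(2*(p:ℝ)+3)) * TT3 n u p * (2*UU n u p + TT3 n u p)
    - (1/(2*(p:ℝ)+1)) * TT4 n u p * (2*VV n u p + TT4 n u p))

lemma decomp (n : ℕ) (u : ℝ) (p : ℕ) (hp : 1 ≤ p) :
    (p:ℝ)^5 * (1/(2*(p:ℝ)+3) * ((1/(2*(p:ℝ)+1))^2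
        - (∫ t in (0:ℝ)..1, Real.cos (bb n u p * t) * t^(2*p))^2)
      - 1/(2*(p:ℝ)+1) * (∫ t in (0:ℝ)..1, Real.sin (bb n u p * t) * t^(2*p+1))^2)
    = Gm n u p + Rem n u p := by
  have hp1 : (1:ℝ) ≤ (p:ℝ) := by exact_mod_cast hp
  have hp0 : (0:ℝ) < (p:ℝ) := by linarith
  have hg3 : (∫ t in (0:ℝ)..1, Real.cos (bb n u p * t) * t^(2*p)) = UU n u p + TT3 n u p := by
    rw [expand_cos]; unfold UU TT3; push_cast; ring
  have hg4 : (∫ t in (0:ℝ)..1, Real.sin (bb n u p * t) * t^(2*p+1)) = VV n u p + TT4 n u p := by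
    rw [expand_sin]; unfold VV TT4; push_cast; ring
  rw [hg3, hg4]
  have key := key_alg (p:ℝ) (bb n u p) (Real.cos (bb n u p)) (Real.sin (bb n u p)) hp0
  have hcs : 1 - Real.sin (bb n u p)^2 - Real.cos (bb n u p)^2 = 0 := by
    have := Real.sin_sq_add_cos_sq (bb n u p); linarith
  rw [hcs, zero_mul, zero_add] at key
  unfold Gm Rem UU VV TT3 TT4

  linear_combination key

lemma bb_tendsto (n : ℕ) (u : ℝ) : Tendsto (bb n u) atTop (𝓝 (π * (n:ℝ))) := by
  have h2p : Tendsto (fun p : ℕ => 1/(2*(p:ℝ))) atTop (𝓝 0) :=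
    tendsto_const_nhds.div_atTop (tendsto_natCast_atTop_atTop.const_mul_atTop two_pos)
  have hup : Tendsto (fun p : ℕ => u/(p:ℝ)) atTop (𝓝 0) :=
    tendsto_const_nhds.div_atTop tendsto_natCast_atTop_atTop
  have : Tendsto (fun p : ℕ => π * ((n:ℝ) * (1 + 1/(2*(p:ℝ)) + u/(p:ℝ)))) atTop
      (𝓝 (π * ((n:ℝ) * (1 + 0 + 0)))) :=
    tendsto_const_nhds.mul (tendsto_const_nhds.mul ((tendsto_const_nhds.add h2p).add hup))
  have he : bb n u = fun p : ℕ => π * ((n:ℝ) * (1 + 1/(2*(p:ℝ)) + u/(p:ℝ))) := rfl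
  rw [he]
  simpa using this

lemma Gm_tendsto (n : ℕ) (u : ℝ) : Tendsto (Gm n u) atTop (𝓝 (π^2/32*(n:ℝ)^2)) := by
  have hq : Tendsto (fun p : ℕ => 1/(p:ℝ)) atTop (𝓝 0) :=
    tendsto_const_nhds.div_atTop tendsto_natCast_atTop_atTop
  have hb := bb_tendsto n u
  have hpair : Tendsto (fun p : ℕ => ((1/(p:ℝ), bb n u p) : ℝ × ℝ)) atTop
      (𝓝 ((0, π*(n:ℝ)) : ℝ × ℝ)) := hq.prodMk_nhds hb
  have hcont : ContinuousAt (fun v : ℝ × ℝ =>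
      N4 v.1 v.2 (Real.cos v.2) (Real.sin v.2)
        / ((2+v.1)^2*(2+2*v.1)^2*(2+3*v.1)^3*(2+4*v.1)^2)) ((0, π*(n:ℝ)) : ℝ × ℝ) := by
    apply ContinuousAt.div
    · unfold N4; fun_prop
    · fun_prop
    · norm_num
  have hcomp := hcont.tendsto.comp hpair
  have hsin : Real.sin (π*(n:ℝ)) = 0 := by rw [mul_comm]; exact Real.sin_nat_mul_pi n
  have hcos2 : Real.cos (π*(n:ℝ))^2 = 1 := by
    have := Real.sin_sq_add_cos_sq (π*(n:ℝ)); rw [hsin] at this; nlinarith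
  have hval : N4 0 (π*(n:ℝ)) (Real.cos (π*(n:ℝ))) (Real.sin (π*(n:ℝ)))
      / ((2+(0:ℝ))^2*(2+2*(0:ℝ))^2*(2+3*(0:ℝ))^3*(2+4*(0:ℝ))^2) = π^2/32*(n:ℝ)^2 := by
    rw [hsin]; unfold N4
    linear_combination ((16*(π*(n:ℝ))^2 - 2128)/512) * hcos2
  rw [show (𝓝 (π^2/32*(n:ℝ)^2)) = 𝓝 (N4 0 (π*(n:ℝ)) (Real.cos (π*(n:ℝ))) (Real.sin (π*(n:ℝ)))
      / ((2+(0:ℝ))^2*(2+2*(0:ℝ))^2*(2+3*(0:ℝ))^3*(2+4*(0:ℝ))^2)) from by rw [hval]]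
  exact hcomp


lemma abs3 (x y z : ℝ) : |x + y - z| ≤ |x| + |y| + |z| := by
  have h1 := abs_sub (x+y) z
  have h2 := abs_add_le x y
  linarith

lemma abs3' (x y z : ℝ) : |x - y - z| ≤ |x| + |y| + |z| := by
  have h1 := abs_sub (x-y) z
  have h2 := abs_sub x y
  linarith

set_option maxHeartbeats 1000000 in
lemma Rem_tendsto (n : ℕ) (u : ℝ) : Tendsto (Rem n u) atTop (𝓝 0) := by
  have hpin : (0:ℝ) ≤ π*(n:ℝ) := by positivity
  have hbev : ∀ᶠ p in atTop, |bb n u p| ≤ (π*(n:ℝ)+1) := by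
    have h1 := Metric.tendsto_nhds.mp (bb_tendsto n u) 1 one_pos
    filter_upwards [h1] with p hp
    rw [Real.dist_eq] at hp
    have h2 : |bb n u p| ≤ |bb n u p - π*(n:ℝ)| + |π*(n:ℝ)| := by
      have := abs_add_le (bb n u p - π*(n:ℝ)) (π*(n:ℝ))
      simpa using this
    rw [abs_of_nonneg hpin] at h2
    linarith
  have hg : Tendsto (fun p : ℕ => (2*(π*(n:ℝ)+1)^3*(2*(1+(π*(n:ℝ)+1)+(π*(n:ℝ)+1)^2)+(π*(n:ℝ)+1)^3))/(p:ℝ)) atTop (𝓝 (0:ℝ)) :=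
    tendsto_const_nhds.div_atTop tendsto_natCast_atTop_atTop
  refine squeeze_zero_norm' ?_ hg
  · filter_upwards [eventually_ge_atTop 1, hbev] with p hp hbp
    have hp1 : (1:ℝ) ≤ (p:ℝ) := by exact_mod_cast hp
    have hp0 : (0:ℝ) < (p:ℝ) := by linarith
    have habs3 : |bb n u p|^3 ≤ (π*(n:ℝ)+1)^3 := pow_le_pow_left₀ (abs_nonneg _) hbp 3
    have habs2 : |bb n u p|^2 ≤ (π*(n:ℝ)+1)^2 := pow_le_pow_left₀ (abs_nonneg _) hbp 2
    have hU : |UU n u p| ≤ (1+(π*(n:ℝ)+1)+(π*(n:ℝ)+1)^2)/(p:ℝ) := by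
      have e1 : |Real.cos (bb n u p) / (2*(p:ℝ)+1)| ≤ 1/(p:ℝ) := by
        rw [abs_div, abs_of_pos (by linarith : (0:ℝ) < 2*(p:ℝ)+1)]
        exact div_le_div₀ zero_le_one (Real.abs_cos_le_one _) hp0 (by linarith)
      have e2 : |bb n u p*Real.sin (bb n u p)/((2*(p:ℝ)+1)*(2*(p:ℝ)+2))| ≤ (π*(n:ℝ)+1)/(p:ℝ) := by
        rw [abs_div, abs_of_pos (by positivity : (0:ℝ) < (2*(p:ℝ)+1)*(2*(p:ℝ)+2))]
        refine div_le_div₀ (by positivity) ?_ hp0 (by nlinarith [pow_nonneg hp0.le 2, pow_nonneg hp0.le 3, hp0.le])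
        calc |bb n u p*Real.sin (bb n u p)| = |bb n u p| * |Real.sin (bb n u p)| := abs_mul _ _
          _ ≤ (π*(n:ℝ)+1)*1 := mul_le_mul hbp (Real.abs_sin_le_one _) (abs_nonneg _) (by positivity)
          _ = (π*(n:ℝ)+1) := mul_one _
      have e3 : |(bb n u p)^2*Real.cos (bb n u p)/((2*(p:ℝ)+1)*(2*(p:ℝ)+2)*(2*(p:ℝ)+3))| ≤ (π*(n:ℝ)+1)^2/(p:ℝ) := by
        rw [abs_div, abs_of_pos (by positivity : (0:ℝ) < (2*(p:ℝ)+1)*(2*(p:ℝ)+2)*(2*(p:ℝ)+3))]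
        refine div_le_div₀ (by positivity) ?_ hp0 (by nlinarith [pow_nonneg hp0.le 2, pow_nonneg hp0.le 3, hp0.le])
        calc |(bb n u p)^2*Real.cos (bb n u p)| = |bb n u p|^2*|Real.cos (bb n u p)| := by
              rw [abs_mul, abs_pow]
          _ ≤ (π*(n:ℝ)+1)^2*1 := mul_le_mul habs2 (Real.abs_cos_le_one _) (abs_nonneg _) (by positivity)
          _ = (π*(n:ℝ)+1)^2 := mul_one _
      have tri : |UU n u p| ≤ |Real.cos (bb n u p) / (2*(p:ℝ)+1)|
          + |bb n u p*Real.sin (bb n u p)/((2*(p:ℝ)+1)*(2*(p:ℝ)+2))|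
          + |(bb n u p)^2*Real.cos (bb n u p)/((2*(p:ℝ)+1)*(2*(p:ℝ)+2)*(2*(p:ℝ)+3))| := by
        unfold UU
        exact abs3 _ _ _
      calc |UU n u p| ≤ 1/(p:ℝ) + (π*(n:ℝ)+1)/(p:ℝ) + (π*(n:ℝ)+1)^2/(p:ℝ) := by linarith
        _ = (1+(π*(n:ℝ)+1)+(π*(n:ℝ)+1)^2)/(p:ℝ) := by ring
    have hV : |VV n u p| ≤ (1+(π*(n:ℝ)+1)+(π*(n:ℝ)+1)^2)/(p:ℝ) := by
      have e1 : |Real.sin (bb n u p) / (2*(p:ℝ)+2)| ≤ 1/(p:ℝ) := by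
        rw [abs_div, abs_of_pos (by linarith : (0:ℝ) < 2*(p:ℝ)+2)]
        exact div_le_div₀ zero_le_one (Real.abs_sin_le_one _) hp0 (by linarith)
      have e2 : |bb n u p*Real.cos (bb n u p)/((2*(p:ℝ)+2)*(2*(p:ℝ)+3))| ≤ (π*(n:ℝ)+1)/(p:ℝ) := by
        rw [abs_div, abs_of_pos (by positivity : (0:ℝ) < (2*(p:ℝ)+2)*(2*(p:ℝ)+3))]
        refine div_le_div₀ (by positivity) ?_ hp0 (by nlinarith [pow_nonneg hp0.le 2, pow_nonneg hp0.le 3, hp0.le])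
        calc |bb n u p*Real.cos (bb n u p)| = |bb n u p| * |Real.cos (bb n u p)| := abs_mul _ _
          _ ≤ (π*(n:ℝ)+1)*1 := mul_le_mul hbp (Real.abs_cos_le_one _) (abs_nonneg _) (by positivity)
          _ = (π*(n:ℝ)+1) := mul_one _
      have e3 : |(bb n u p)^2*Real.sin (bb n u p)/((2*(p:ℝ)+2)*(2*(p:ℝ)+3)*(2*(p:ℝ)+4))| ≤ (π*(n:ℝ)+1)^2/(p:ℝ) := by
        rw [abs_div, abs_of_pos (by positivity : (0:ℝ) < (2*(p:ℝ)+2)*(2*(p:ℝ)+3)*(2*(p:ℝ)+4))]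
        refine div_le_div₀ (by positivity) ?_ hp0 (by nlinarith [pow_nonneg hp0.le 2, pow_nonneg hp0.le 3, hp0.le])
        calc |(bb n u p)^2*Real.sin (bb n u p)| = |bb n u p|^2*|Real.sin (bb n u p)| := by
              rw [abs_mul, abs_pow]
          _ ≤ (π*(n:ℝ)+1)^2*1 := mul_le_mul habs2 (Real.abs_sin_le_one _) (abs_nonneg _) (by positivity)
          _ = (π*(n:ℝ)+1)^2 := mul_one _
      have tri : |VV n u p| ≤ |Real.sin (bb n u p) / (2*(p:ℝ)+2)|
          + |bb n u p*Real.cos (bb n u p)/((2*(p:ℝ)+2)*(2*(p:ℝ)+3))|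
          + |(bb n u p)^2*Real.sin (bb n u p)/((2*(p:ℝ)+2)*(2*(p:ℝ)+3)*(2*(p:ℝ)+4))| := by
        unfold VV
        exact abs3' _ _ _
      calc |VV n u p| ≤ 1/(p:ℝ) + (π*(n:ℝ)+1)/(p:ℝ) + (π*(n:ℝ)+1)^2/(p:ℝ) := by linarith
        _ = (1+(π*(n:ℝ)+1)+(π*(n:ℝ)+1)^2)/(p:ℝ) := by ring
    have hT3 : |TT3 n u p| ≤ (π*(n:ℝ)+1)^3/(p:ℝ)^4 := by
      unfold TT3
      rw [abs_mul, abs_div, abs_neg, abs_pow,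
        abs_of_pos (by positivity : (0:ℝ) < (2*(p:ℝ)+1)*(2*(p:ℝ)+2)*(2*(p:ℝ)+3))]
      have hS := bound_sin (bb n u p) (2*p+3)
      push_cast at hS
      calc |bb n u p|^3/((2*(p:ℝ)+1)*(2*(p:ℝ)+2)*(2*(p:ℝ)+3))
            * |∫ t in (0:ℝ)..1, Real.sin (bb n u p*t) * t^(2*p+3)|
          ≤ (π*(n:ℝ)+1)^3/((2*(p:ℝ)+1)*(2*(p:ℝ)+2)*(2*(p:ℝ)+3)) * (1/(2*(p:ℝ)+3+1)) := by
            gcongr <;> first | exact habs3 | exact hS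
        _ = (π*(n:ℝ)+1)^3/(((2*(p:ℝ)+1)*(2*(p:ℝ)+2)*(2*(p:ℝ)+3))*(2*(p:ℝ)+3+1)) := by
            rw [div_mul_div_comm, mul_one]
        _ ≤ (π*(n:ℝ)+1)^3/(p:ℝ)^4 := by
            gcongr
            nlinarith [pow_nonneg hp0.le 2, pow_nonneg hp0.le 3, pow_nonneg hp0.le 4, hp0.le]
    have hT4 : |TT4 n u p| ≤ (π*(n:ℝ)+1)^3/(p:ℝ)^4 := by
      unfold TT4
      rw [abs_mul, abs_div, abs_pow,
        abs_of_pos (by positivity : (0:ℝ) < (2*(p:ℝ)+2)*(2*(p:ℝ)+3)*(2*(p:ℝ)+4))]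
      have hS := bound_cos (bb n u p) (2*p+1+3)
      push_cast at hS
      calc |bb n u p|^3/((2*(p:ℝ)+2)*(2*(p:ℝ)+3)*(2*(p:ℝ)+4))
            * |∫ t in (0:ℝ)..1, Real.cos (bb n u p*t) * t^(2*p+1+3)|
          ≤ (π*(n:ℝ)+1)^3/((2*(p:ℝ)+2)*(2*(p:ℝ)+3)*(2*(p:ℝ)+4)) * (1/(2*(p:ℝ)+1+3+1)) := by
            gcongr <;> first | exact habs3 | exact hS
        _ = (π*(n:ℝ)+1)^3/(((2*(p:ℝ)+2)*(2*(p:ℝ)+3)*(2*(p:ℝ)+4))*(2*(p:ℝ)+1+3+1)) := by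
            rw [div_mul_div_comm, mul_one]
        _ ≤ (π*(n:ℝ)+1)^3/(p:ℝ)^4 := by
            gcongr
            nlinarith [pow_nonneg hp0.le 2, pow_nonneg hp0.le 3, pow_nonneg hp0.le 4, hp0.le]
    have hA3p : (π*(n:ℝ)+1)^3/(p:ℝ)^4 ≤ (π*(n:ℝ)+1)^3/(p:ℝ) := by
      gcongr
      nlinarith [hp1, pow_nonneg hp0.le 2, pow_nonneg hp0.le 3]
    have hWU : |2*UU n u p + TT3 n u p| ≤ (2*(1+(π*(n:ℝ)+1)+(π*(n:ℝ)+1)^2)+(π*(n:ℝ)+1)^3)/(p:ℝ) := by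
      have h1 := abs_add_le (2*UU n u p) (TT3 n u p)
      rw [abs_mul] at h1
      have h2 : |(2:ℝ)| = 2 := by norm_num
      rw [h2] at h1
      calc |2*UU n u p + TT3 n u p| ≤ 2*|UU n u p| + |TT3 n u p| := h1
        _ ≤ 2*((1+(π*(n:ℝ)+1)+(π*(n:ℝ)+1)^2)/(p:ℝ)) + (π*(n:ℝ)+1)^3/(p:ℝ) := by
            have := hT3.trans hA3p
            nlinarith [hU]
        _ = (2*(1+(π*(n:ℝ)+1)+(π*(n:ℝ)+1)^2)+(π*(n:ℝ)+1)^3)/(p:ℝ) := by ring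
    have hWV : |2*VV n u p + TT4 n u p| ≤ (2*(1+(π*(n:ℝ)+1)+(π*(n:ℝ)+1)^2)+(π*(n:ℝ)+1)^3)/(p:ℝ) := by
      have h1 := abs_add_le (2*VV n u p) (TT4 n u p)
      rw [abs_mul] at h1
      have h2 : |(2:ℝ)| = 2 := by norm_num
      rw [h2] at h1
      calc |2*VV n u p + TT4 n u p| ≤ 2*|VV n u p| + |TT4 n u p| := h1
        _ ≤ 2*((1+(π*(n:ℝ)+1)+(π*(n:ℝ)+1)^2)/(p:ℝ)) + (π*(n:ℝ)+1)^3/(p:ℝ) := by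
            have := hT4.trans hA3p
            nlinarith [hV]
        _ = (2*(1+(π*(n:ℝ)+1)+(π*(n:ℝ)+1)^2)+(π*(n:ℝ)+1)^3)/(p:ℝ) := by ring
    have hX : |(-(1/(2*(p:ℝ)+3))) * TT3 n u p * (2*UU n u p + TT3 n u p)|
        ≤ (1/(p:ℝ))*((π*(n:ℝ)+1)^3/(p:ℝ)^4)*((2*(1+(π*(n:ℝ)+1)+(π*(n:ℝ)+1)^2)+(π*(n:ℝ)+1)^3)/(p:ℝ)) := by
      rw [abs_mul, abs_mul, abs_neg, abs_of_pos (show (0:ℝ) < 1/(2*(p:ℝ)+3) by positivity)]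
      gcongr <;> first | exact hT3 | exact hWU | linarith
    have hY : |(1/(2*(p:ℝ)+1)) * TT4 n u p * (2*VV n u p + TT4 n u p)|
        ≤ (1/(p:ℝ))*((π*(n:ℝ)+1)^3/(p:ℝ)^4)*((2*(1+(π*(n:ℝ)+1)+(π*(n:ℝ)+1)^2)+(π*(n:ℝ)+1)^3)/(p:ℝ)) := by
      rw [abs_mul, abs_mul, abs_of_pos (show (0:ℝ) < 1/(2*(p:ℝ)+1) by positivity)]
      gcongr <;> first | exact hT4 | exact hWV | linarith
    rw [Real.norm_eq_abs]
    have hX2 : |(-(1/(2*(p:ℝ)+3))) * TT3 n u p * (2*UU n u p + TT3 n u p)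
        - (1/(2*(p:ℝ)+1)) * TT4 n u p * (2*VV n u p + TT4 n u p)|
        ≤ (1/(p:ℝ))*((π*(n:ℝ)+1)^3/(p:ℝ)^4)*((2*(1+(π*(n:ℝ)+1)+(π*(n:ℝ)+1)^2)+(π*(n:ℝ)+1)^3)/(p:ℝ))
          + (1/(p:ℝ))*((π*(n:ℝ)+1)^3/(p:ℝ)^4)*((2*(1+(π*(n:ℝ)+1)+(π*(n:ℝ)+1)^2)+(π*(n:ℝ)+1)^3)/(p:ℝ)) := by
      have htri := abs_sub ((-(1/(2*(p:ℝ)+3))) * TT3 n u p * (2*UU n u p + TT3 n u p))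
        ((1/(2*(p:ℝ)+1)) * TT4 n u p * (2*VV n u p + TT4 n u p))
      linarith
    have hfin : |Rem n u p|
        ≤ (p:ℝ)^5 * ((1/(p:ℝ))*((π*(n:ℝ)+1)^3/(p:ℝ)^4)*((2*(1+(π*(n:ℝ)+1)+(π*(n:ℝ)+1)^2)+(π*(n:ℝ)+1)^3)/(p:ℝ))
          + (1/(p:ℝ))*((π*(n:ℝ)+1)^3/(p:ℝ)^4)*((2*(1+(π*(n:ℝ)+1)+(π*(n:ℝ)+1)^2)+(π*(n:ℝ)+1)^3)/(p:ℝ))) := by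
      unfold Rem
      rw [abs_mul, abs_of_nonneg (by positivity : (0:ℝ) ≤ (p:ℝ)^5)]
      exact mul_le_mul_of_nonneg_left hX2 (by positivity)
    have heq : (p:ℝ)^5 * ((1/(p:ℝ))*((π*(n:ℝ)+1)^3/(p:ℝ)^4)*((2*(1+(π*(n:ℝ)+1)+(π*(n:ℝ)+1)^2)+(π*(n:ℝ)+1)^3)/(p:ℝ))
          + (1/(p:ℝ))*((π*(n:ℝ)+1)^3/(p:ℝ)^4)*((2*(1+(π*(n:ℝ)+1)+(π*(n:ℝ)+1)^2)+(π*(n:ℝ)+1)^3)/(p:ℝ)))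
        = (2*(π*(n:ℝ)+1)^3*(2*(1+(π*(n:ℝ)+1)+(π*(n:ℝ)+1)^2)+(π*(n:ℝ)+1)^3))/(p:ℝ) := by
      field_simp
      ring
    exact hfin.trans (le_of_eq heq)

theorem Ap_peak_asymptotic (n : ℕ) (hn : 1 ≤ n) (u : ℝ) :
    Tendsto (fun p : ℕ =>
      let x : ℝ := (n : ℝ) * (1 + 1 / (2 * p) + u / p)
      let g1 : ℝ := 1 / (2 * (p : ℝ) + 1)
      let g2 : ℝ := 1 / (2 * (p : ℝ) + 3)
      let g3 : ℝ := ∫ t in (0 : ℝ)..1, Real.cos (π * x * t) * t ^ (2 * p)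
      let g4 : ℝ := ∫ t in (0 : ℝ)..1, Real.sin (π * x * t) * t ^ (2 * p + 1)
      let C : ℝ := g1 ^ 2 - g3 ^ 2
      (p : ℝ) ^ 5 * (g2 * C - g1 * g4 ^ 2))
      atTop (nhds (π ^ 2 / 32 * (n : ℝ) ^ 2)) := by
  have hFG : (fun p : ℕ => (p:ℝ)^5 * (1/(2*(p:ℝ)+3) * ((1/(2*(p:ℝ)+1))^2
        - (∫ t in (0:ℝ)..1, Real.cos (bb n u p * t) * t^(2*p))^2)
      - 1/(2*(p:ℝ)+1) * (∫ t in (0:ℝ)..1, Real.sin (bb n u p * t) * t^(2*p+1))^2))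
      =ᶠ[atTop] (fun p => Gm n u p + Rem n u p) := by
    filter_upwards [eventually_ge_atTop 1] with p hp
    exact decomp n u p hp
  have hmain : Tendsto (fun p : ℕ => Gm n u p + Rem n u p) atTop
      (𝓝 (π^2/32*(n:ℝ)^2 + 0)) := (Gm_tendsto n u).add (Rem_tendsto n u)
  rw [add_zero] at hmain
  have hfinal := Tendsto.congr' hFG.symm hmain
  have hee : (fun p : ℕ => (p:ℝ)^5 * (1/(2*(p:ℝ)+3) * ((1/(2*(p:ℝ)+1))^2
        - (∫ t in (0:ℝ)..1, Real.cos (bb n u p * t) * t^(2*p))^2)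
      - 1/(2*(p:ℝ)+1) * (∫ t in (0:ℝ)..1, Real.sin (bb n u p * t) * t^(2*p+1))^2))
      = (fun p : ℕ =>
      let x : ℝ := (n : ℝ) * (1 + 1 / (2 * p) + u / p)
      let g1 : ℝ := 1 / (2 * (p : ℝ) + 1)
      let g2 : ℝ := 1 / (2 * (p : ℝ) + 3)
      let g3 : ℝ := ∫ t in (0 : ℝ)..1, Real.cos (π * x * t) * t ^ (2 * p)
      let g4 : ℝ := ∫ t in (0 : ℝ)..1, Real.sin (π * x * t) * t ^ (2 * p + 1)
      let C : ℝ := g1 ^ 2 - g3 ^ 2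
      (p : ℝ) ^ 5 * (g2 * C - g1 * g4 ^ 2)) := by
    funext p
    simp only [bb]
  rw [hee] at hfinal
  exact hfinal
end

section
/- For fixed positive integer n and fixed real u, as p → ∞, p^5 · B_p(n(1 + 1/(2p) + u/p)) → (-1)^n (π^2/32) n^2, where B_p(x) = g_{5,p}(x) C_p(x) - g_{3,p}(x) g_{4,p}(x)^2 with g_{3,p}(x) = ∫_0^1 cos(πxt) t^{2p} dt, g_{4,p}(x) = ∫_0^1 sin(πxt) t^{2p+1} dt, g_{5,p}(x) = ∫_0^1 cos(πxt) t^{2p+2} dt, and C_p(x) = (1/(2p+1))^2 - g_{3,p}(x)^2. -/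
open Real Filter intervalIntegral MeasureTheory Set

namespace BpAux


/-- |1 - cos y| bound -/
lemma cos2 (y : ℝ) : 1 - Real.cos y ≤ y ^ 2 / 2 := by
  rcases le_total 0 y with hy | hy
  · have h1 : (1 : ℝ) - Real.cos y = ∫ t in (0:ℝ)..y, Real.sin t := by
      rw [integral_sin]; simp
    have h2 : (∫ t in (0:ℝ)..y, Real.sin t) ≤ ∫ t in (0:ℝ)..y, t := by
      apply integral_mono_on hy ((by continuity : Continuous _).intervalIntegrable _ _)
        ((by continuity : Continuous _).intervalIntegrable _ _)
      intro t ht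
      calc Real.sin t ≤ |Real.sin t| := le_abs_self _
        _ ≤ |t| := Real.abs_sin_le_abs
        _ = t := abs_of_nonneg ht.1
    have h3 : (∫ t in (0:ℝ)..y, t) = y ^ 2 / 2 := by rw [integral_id]; ring
    linarith [h1 ▸ h2, h3 ▸ h2]
  · have := (by
      have h1 : (1 : ℝ) - Real.cos (-y) = ∫ t in (0:ℝ)..(-y), Real.sin t := by
        rw [integral_sin]; simp
      have h2 : (∫ t in (0:ℝ)..(-y), Real.sin t) ≤ ∫ t in (0:ℝ)..(-y), t := by
        apply integral_mono_on (by linarith) ((by continuity : Continuous _).intervalIntegrable _ _)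
          ((by continuity : Continuous _).intervalIntegrable _ _)
        intro t ht
        calc Real.sin t ≤ |Real.sin t| := le_abs_self _
          _ ≤ |t| := Real.abs_sin_le_abs
          _ = t := abs_of_nonneg ht.1
      have h3 : (∫ t in (0:ℝ)..(-y), t) = y ^ 2 / 2 := by rw [integral_id]; ring
      linarith : 1 - Real.cos (-y) ≤ y ^ 2 / 2)
    rwa [Real.cos_neg] at this

lemma sin3 (y : ℝ) : |Real.sin y - y| ≤ |y| ^ 3 / 6 := by
  have key : ∀ z : ℝ, 0 ≤ z → |Real.sin z - z| ≤ z ^ 3 / 6 := by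
    intro z hz
    have h1 : Real.sin z - z = ∫ t in (0:ℝ)..z, (Real.cos t - 1) := by
      rw [integral_sub ((by continuity : Continuous _).intervalIntegrable _ _)
        ((by continuity : Continuous _).intervalIntegrable _ _), integral_cos]
      simp
    rw [h1]
    calc |∫ t in (0:ℝ)..z, (Real.cos t - 1)| ≤ ∫ t in (0:ℝ)..z, |Real.cos t - 1| :=
          abs_integral_le_integral_abs hz
      _ ≤ ∫ t in (0:ℝ)..z, t ^ 2 / 2 := by
          apply integral_mono_on hz ((by continuity : Continuous _).intervalIntegrable _ _)
            ((by continuity : Continuous _).intervalIntegrable _ _)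
          intro t _
          rw [abs_sub_comm, abs_of_nonneg (by linarith [Real.cos_le_one t])]
          exact cos2 t
      _ = z ^ 3 / 6 := by
          rw [intervalIntegral.integral_div, integral_pow]; push_cast; ring
  rcases le_total 0 y with hy | hy
  · rw [abs_of_nonneg hy]; exact key y hy
  · have := key (-y) (by linarith)
    rw [Real.sin_neg, abs_of_nonpos hy] at *
    rw [show -Real.sin y - -y = -(Real.sin y - y) by ring, abs_neg] at this
    linarith [this]

lemma cos4 (y : ℝ) : |Real.cos y - (1 - y ^ 2 / 2)| ≤ y ^ 4 / 24 := by
  have key : ∀ z : ℝ, 0 ≤ z → |Real.cos z - (1 - z ^ 2 / 2)| ≤ z ^ 4 / 24 := by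
    intro z hz
    have h1 : Real.cos z - (1 - z ^ 2 / 2) = ∫ t in (0:ℝ)..z, (t - Real.sin t) := by
      rw [integral_sub ((by continuity : Continuous _).intervalIntegrable _ _)
        ((by continuity : Continuous _).intervalIntegrable _ _), integral_sin, integral_id]
      simp; ring
    rw [h1]
    calc |∫ t in (0:ℝ)..z, (t - Real.sin t)| ≤ ∫ t in (0:ℝ)..z, |t - Real.sin t| :=
          abs_integral_le_integral_abs hz
      _ ≤ ∫ t in (0:ℝ)..z, t ^ 3 / 6 := by
          apply integral_mono_on hz ((by continuity : Continuous _).intervalIntegrable _ _)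
            ((by continuity : Continuous _).intervalIntegrable _ _)
          intro t ht
          have := sin3 t
          rw [abs_sub_comm, abs_of_nonneg ht.1] at this
          linarith
      _ = z ^ 4 / 24 := by
          rw [intervalIntegral.integral_div, integral_pow]; push_cast; ring
  rcases le_total 0 y with hy | hy
  · exact key y hy
  · have := key (-y) (by linarith)
    rw [Real.cos_neg] at this
    convert this using 2 <;> ring



lemma intpow (k : ℕ) : (∫ t in (0:ℝ)..1, t ^ k) = 1 / ((k : ℝ) + 1) := by
  rw [integral_pow]; norm_num

lemma int_five (m : ℕ) (c0 c1 c2 c3 c4 : ℝ) :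
    (∫ t in (0:ℝ)..1, (c0 * t ^ m + c1 * t ^ (m+1) + c2 * t ^ (m+2)
        + c3 * t ^ (m+3) + c4 * t ^ (m+4)))
      = c0 / (m+1) + c1 / (m+2) + c2 / (m+3) + c3 / (m+4) + c4 / (m+5) := by
  have I : ∀ (c : ℝ) (j : ℕ), IntervalIntegrable (fun t : ℝ => c * t ^ j) volume 0 1 :=
    fun c j => ((continuous_const.mul (continuous_pow j)).intervalIntegrable _ _)
  have i1 := I c0 m
  have i2 := I c1 (m+1)
  have i3 := I c2 (m+2)
  have i4 := I c3 (m+3)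
  have i5 := I c4 (m+4)
  rw [intervalIntegral.integral_add (((i1.add i2).add i3).add i4) i5,
    intervalIntegral.integral_add ((i1.add i2).add i3) i4,
    intervalIntegral.integral_add (i1.add i2) i3,
    intervalIntegral.integral_add i1 i2,
    intervalIntegral.integral_const_mul, intervalIntegral.integral_const_mul, intervalIntegral.integral_const_mul, intervalIntegral.integral_const_mul,
    intervalIntegral.integral_const_mul, intpow, intpow, intpow, intpow, intpow]
  push_cast; ring

lemma P1 (m : ℕ) (A B : ℝ) :
    (∫ t in (0:ℝ)..1, (A * (t - 1) + B * t) * t ^ m)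
      = -A / (((m:ℝ)+1) * ((m:ℝ)+2)) + B / ((m:ℝ)+2) := by
  have h1 : ((m:ℝ)+1) ≠ 0 := by positivity
  have h2 : ((m:ℝ)+2) ≠ 0 := by positivity
  have : (fun t : ℝ => (A * (t - 1) + B * t) * t ^ m)
      = fun t : ℝ => (-A) * t ^ m + (A + B) * t ^ (m+1) + 0 * t ^ (m+2)
        + 0 * t ^ (m+3) + 0 * t ^ (m+4) := by
    funext t; ring
  rw [this, int_five]
  field_simp; ring

lemma P2 (m : ℕ) (A B : ℝ) :
    (∫ t in (0:ℝ)..1, (A * (t - 1) + B * t) ^ 2 * t ^ m)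
      = 2 * A ^ 2 / (((m:ℝ)+1) * ((m:ℝ)+2) * ((m:ℝ)+3))
        - 2 * A * B / (((m:ℝ)+2) * ((m:ℝ)+3)) + B ^ 2 / ((m:ℝ)+3) := by
  have h1 : ((m:ℝ)+1) ≠ 0 := by positivity
  have h2 : ((m:ℝ)+2) ≠ 0 := by positivity
  have h3 : ((m:ℝ)+3) ≠ 0 := by positivity
  have : (fun t : ℝ => (A * (t - 1) + B * t) ^ 2 * t ^ m)
      = fun t : ℝ => (A^2) * t ^ m + (-(2*A*(A+B))) * t ^ (m+1) + ((A+B)^2) * t ^ (m+2)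
        + 0 * t ^ (m+3) + 0 * t ^ (m+4) := by
    funext t; ring
  rw [this, int_five]
  field_simp; ring

lemma Q2 (m : ℕ) :
    (∫ t in (0:ℝ)..1, (1 - t) ^ 2 * t ^ m)
      = 2 / (((m:ℝ)+1) * ((m:ℝ)+2) * ((m:ℝ)+3)) := by
  have h1 : ((m:ℝ)+1) ≠ 0 := by positivity
  have h2 : ((m:ℝ)+2) ≠ 0 := by positivity
  have h3 : ((m:ℝ)+3) ≠ 0 := by positivity
  have : (fun t : ℝ => (1 - t) ^ 2 * t ^ m)
      = fun t : ℝ => 1 * t ^ m + (-2) * t ^ (m+1) + 1 * t ^ (m+2)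
        + 0 * t ^ (m+3) + 0 * t ^ (m+4) := by
    funext t; ring
  rw [this, int_five]
  field_simp; ring

lemma Q3 (m : ℕ) :
    (∫ t in (0:ℝ)..1, (1 - t) ^ 3 * t ^ m)
      = 6 / (((m:ℝ)+1) * ((m:ℝ)+2) * ((m:ℝ)+3) * ((m:ℝ)+4)) := by
  have h1 : ((m:ℝ)+1) ≠ 0 := by positivity
  have h2 : ((m:ℝ)+2) ≠ 0 := by positivity
  have h3 : ((m:ℝ)+3) ≠ 0 := by positivity
  have h4 : ((m:ℝ)+4) ≠ 0 := by positivity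
  have : (fun t : ℝ => (1 - t) ^ 3 * t ^ m)
      = fun t : ℝ => 1 * t ^ m + (-3) * t ^ (m+1) + 3 * t ^ (m+2)
        + (-1) * t ^ (m+3) + 0 * t ^ (m+4) := by
    funext t; ring
  rw [this, int_five]
  field_simp; ring

lemma Q4 (m : ℕ) :
    (∫ t in (0:ℝ)..1, (1 - t) ^ 4 * t ^ m)
      = 24 / (((m:ℝ)+1) * ((m:ℝ)+2) * ((m:ℝ)+3) * ((m:ℝ)+4) * ((m:ℝ)+5)) := by
  have h1 : ((m:ℝ)+1) ≠ 0 := by positivity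
  have h2 : ((m:ℝ)+2) ≠ 0 := by positivity
  have h3 : ((m:ℝ)+3) ≠ 0 := by positivity
  have h4 : ((m:ℝ)+4) ≠ 0 := by positivity
  have h5 : ((m:ℝ)+5) ≠ 0 := by positivity
  have : (fun t : ℝ => (1 - t) ^ 4 * t ^ m)
      = fun t : ℝ => 1 * t ^ m + (-4) * t ^ (m+1) + 6 * t ^ (m+2)
        + (-4) * t ^ (m+3) + 1 * t ^ (m+4) := by
    funext t; ring
  rw [this, int_five]
  field_simp; ring



lemma tq : Tendsto (fun p : ℕ => 2*(p:ℝ)) atTop atTop :=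
  Tendsto.const_mul_atTop (by norm_num) tendsto_natCast_atTop_atTop

lemma tqc (c : ℝ) : Tendsto (fun p : ℕ => 2*(p:ℝ) + c) atTop atTop :=
  tendsto_atTop_add_const_right _ c tq

lemma tinv (c : ℝ) : Tendsto (fun p : ℕ => 1/(2*(p:ℝ) + c)) atTop (nhds 0) := by
  simpa [one_div, Pi.inv_def] using (tqc c).inv_tendsto_atTop

lemma trat (c : ℝ) : Tendsto (fun p : ℕ => 2*(p:ℝ)/(2*(p:ℝ) + c)) atTop (nhds 1) := by
  have h : Tendsto (fun p : ℕ => 1 - c * (1/(2*(p:ℝ)+c))) atTop (nhds 1) := by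
    have h2 := (tinv c).const_mul c
    simpa using tendsto_const_nhds.sub h2
  apply h.congr'
  filter_upwards [(tqc c).eventually_gt_atTop 0] with p hp
  field_simp
  ring

lemma integral_err (m k : ℕ) (c1 c2 : ℝ) (F : ℝ → ℝ) (hFc : Continuous F)
    (hF : ∀ t ∈ Icc (0:ℝ) 1, |F t| ≤ c1 * (1-t)^k + c2) :
    |∫ t in (0:ℝ)..1, F t * t ^ m|
      ≤ c1 * (∫ t in (0:ℝ)..1, (1-t)^k * t^m) + c2 / ((m:ℝ)+1) := by
  have key : |∫ t in (0:ℝ)..1, F t * t ^ m|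
      ≤ ∫ t in (0:ℝ)..1, (c1*(1-t)^k + c2) * t^m := by
    calc |∫ t in (0:ℝ)..1, F t * t ^ m| ≤ ∫ t in (0:ℝ)..1, |F t * t ^ m| :=
        abs_integral_le_integral_abs zero_le_one
      _ ≤ _ := by
        apply integral_mono_on zero_le_one
          (((hFc.mul (continuous_pow m)).abs).intervalIntegrable _ _)
          ((by continuity : Continuous fun t : ℝ => (c1*(1-t)^k + c2) * t^m).intervalIntegrable _ _)
        intro t ht
        show |F t * t ^ m| ≤ _
        rw [abs_mul, abs_pow, abs_of_nonneg ht.1]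
        exact mul_le_mul_of_nonneg_right (hF t ht) (pow_nonneg ht.1 m)
  have split : (∫ t in (0:ℝ)..1, (c1*(1-t)^k + c2) * t^m)
      = c1 * (∫ t in (0:ℝ)..1, (1-t)^k * t^m) + c2 / ((m:ℝ)+1) := by
    have e : (fun t : ℝ => (c1*(1-t)^k + c2) * t^m)
        = fun t : ℝ => c1 * ((1-t)^k * t^m) + c2 * t^m := by funext t; ring
    rw [e, intervalIntegral.integral_add
        ((by continuity : Continuous fun t : ℝ => c1*((1-t)^k*t^m)).intervalIntegrable _ _)
        ((by continuity : Continuous fun t : ℝ => c2*t^m).intervalIntegrable _ _),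
      intervalIntegral.integral_const_mul, intervalIntegral.integral_const_mul, intpow]
    ring
  rw [split] at key; exact key

noncomputable def X (n : ℕ) (u : ℝ) (p : ℕ) : ℝ := n * (1 + 1/(2*(p:ℝ)) + u/(p:ℝ))

noncomputable def PH (n : ℕ) (u : ℝ) (p : ℕ) (t : ℝ) : ℝ := π * X n u p * t - π * n

lemma PH_cont (n : ℕ) (u : ℝ) (p : ℕ) : Continuous (PH n u p) := by
  unfold PH; continuity

lemma X_sub {n : ℕ} {u : ℝ} {p : ℕ} (hp : 1 ≤ p) :
    X n u p - n = (n:ℝ)*(1+2*u)/(2*(p:ℝ)) := by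
  have hp0 : (p:ℝ) ≠ 0 := Nat.cast_ne_zero.mpr (by omega)
  unfold X; field_simp; ring

lemma PH_eq (n : ℕ) (u : ℝ) (p : ℕ) (t : ℝ) :
    PH n u p t = (π*(n:ℝ))*(t-1) + (π*(X n u p - n))*t := by
  unfold PH; ring

lemma PH_abs_le (n : ℕ) (u : ℝ) (p : ℕ) {t : ℝ} (ht : t ∈ Icc (0:ℝ) 1) :
    |PH n u p t| ≤ π*(n:ℝ)*(1-t) + π*|X n u p - n| := by
  rw [PH_eq]
  have hpi := pi_pos
  have hn0 : (0:ℝ) ≤ n := Nat.cast_nonneg n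
  have h1 : |(π*(n:ℝ))*(t-1)| = π*(n:ℝ)*(1-t) := by
    rw [abs_of_nonpos (mul_nonpos_of_nonneg_of_nonpos (mul_nonneg hpi.le hn0)
      (by linarith [ht.2]))]; ring
  have h2 : |(π*(X n u p - n))*t| ≤ π*|X n u p - n| := by
    rw [abs_mul, abs_mul, abs_of_nonneg hpi.le]
    have htt : |t| ≤ 1 := abs_le.mpr ⟨by linarith [ht.1], ht.2⟩
    have := mul_le_mul_of_nonneg_left htt (mul_nonneg hpi.le (abs_nonneg (X n u p - (n:ℝ))))
    simpa using this
  calc |(π*(n:ℝ))*(t-1) + (π*(X n u p - n))*t|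
      ≤ |(π*(n:ℝ))*(t-1)| + |(π*(X n u p - n))*t| := abs_add_le _ _
    _ ≤ π*(n:ℝ)*(1-t) + π*|X n u p - n| := by rw [h1]; linarith


-- placeholders from previous parts
lemma pt2 (n : ℕ) (u : ℝ) (p : ℕ) {t : ℝ} (ht : t ∈ Icc (0:ℝ) 1) :
    |1 - Real.cos (PH n u p t)| ≤ (π^2*(n:ℝ)^2) * (1-t)^2 + π^2*(X n u p - n)^2 := by
  set φ := PH n u p t with hφ
  set a := π*(n:ℝ)*(1-t) with haa
  set b := π*|X n u p - n| with hbb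
  have ha : 0 ≤ a := mul_nonneg (mul_nonneg pi_pos.le n.cast_nonneg) (by linarith [ht.2])
  have hb : 0 ≤ b := mul_nonneg pi_pos.le (abs_nonneg _)
  have hab : |φ| ≤ a + b := PH_abs_le n u p ht
  have h1 : 1 - Real.cos φ ≤ φ^2/2 := cos2 φ
  have h2 : φ^2 ≤ (a+b)^2 := by
    have := pow_le_pow_left₀ (abs_nonneg φ) hab 2
    rwa [sq_abs] at this
  have h3 : |1 - Real.cos φ| = 1 - Real.cos φ :=
    abs_of_nonneg (by linarith [Real.cos_le_one φ])
  have hb2 : b^2 = π^2*(X n u p - n)^2 := by rw [hbb, mul_pow, sq_abs]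
  have ha2 : a^2 = (π^2*(n:ℝ)^2) * (1-t)^2 := by rw [haa]; ring
  nlinarith [sq_nonneg (a-b)]

lemma pt3 (n : ℕ) (u : ℝ) (p : ℕ) {t : ℝ} (ht : t ∈ Icc (0:ℝ) 1) :
    |Real.sin (PH n u p t) - PH n u p t|
      ≤ ((2/3)*π^3*(n:ℝ)^3) * (1-t)^3 + (2/3)*π^3*|X n u p - n|^3 := by
  set φ := PH n u p t with hφ
  set a := π*(n:ℝ)*(1-t) with haa
  set b := π*|X n u p - n| with hbb
  have ha : 0 ≤ a := mul_nonneg (mul_nonneg pi_pos.le n.cast_nonneg) (by linarith [ht.2])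
  have hb : 0 ≤ b := mul_nonneg pi_pos.le (abs_nonneg _)
  have hab : |φ| ≤ a + b := PH_abs_le n u p ht
  have h1 : |Real.sin φ - φ| ≤ |φ|^3/6 := sin3 φ
  have h2 : |φ|^3 ≤ (a+b)^3 := pow_le_pow_left₀ (abs_nonneg φ) hab 3
  have key : (a+b)^3 ≤ 4*(a^3+b^3) := by
    nlinarith [mul_nonneg (add_nonneg ha hb) (sq_nonneg (a-b))]
  have ha3 : a^3 = π^3*(n:ℝ)^3*(1-t)^3 := by rw [haa]; ring
  have hb3 : b^3 = π^3*|X n u p - n|^3 := by rw [hbb, mul_pow]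
  nlinarith

lemma pt4 (n : ℕ) (u : ℝ) (p : ℕ) {t : ℝ} (ht : t ∈ Icc (0:ℝ) 1) :
    |(1 - Real.cos (PH n u p t)) - (PH n u p t)^2/2|
      ≤ ((1/3)*π^4*(n:ℝ)^4) * (1-t)^4 + (1/3)*π^4*(X n u p - n)^4 := by
  set φ := PH n u p t with hφ
  set a := π*(n:ℝ)*(1-t) with haa
  set b := π*|X n u p - n| with hbb
  have ha : 0 ≤ a := mul_nonneg (mul_nonneg pi_pos.le n.cast_nonneg) (by linarith [ht.2])
  have hb : 0 ≤ b := mul_nonneg pi_pos.le (abs_nonneg _)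
  have hab : |φ| ≤ a + b := PH_abs_le n u p ht
  have h1 : |Real.cos φ - (1 - φ^2/2)| ≤ φ^4/24 := cos4 φ
  have h0 : |(1 - Real.cos φ) - φ^2/2| = |Real.cos φ - (1 - φ^2/2)| := by
    rw [show (1 - Real.cos φ) - φ^2/2 = -(Real.cos φ - (1 - φ^2/2)) by ring, abs_neg]
  have h2 : φ^4 ≤ (a+b)^4 := by
    have h := pow_le_pow_left₀ (abs_nonneg φ) hab 4
    rwa [show |φ|^4 = φ^4 by rw [← abs_pow]; exact abs_of_nonneg (by positivity)] at h
  have key : (a+b)^4 ≤ 8*(a^4+b^4) := by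
    nlinarith [sq_nonneg (a-b), sq_nonneg (a^2-b^2), mul_nonneg ha hb, sq_nonneg (a+b)]
  have ha4 : a^4 = π^4*(n:ℝ)^4*(1-t)^4 := by rw [haa]; ring
  have hb4 : b^4 = π^4*(X n u p - n)^4 := by
    rw [hbb, mul_pow, show |X n u p - (n:ℝ)|^4 = (X n u p - n)^4 by
      rw [← abs_pow]; exact abs_of_nonneg (by positivity)]
  nlinarith

lemma L5 (n : ℕ) (u : ℝ) :
    Tendsto (fun p : ℕ =>
      2*(p:ℝ) * ∫ t in (0:ℝ)..1, Real.cos (PH n u p t) * t ^ (2*p+2)) atTop (nhds 1) := by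
  have hE : ∀ p : ℕ, |∫ t in (0:ℝ)..1, (1 - Real.cos (PH n u p t)) * t ^ (2*p+2)|
      ≤ (π^2*(n:ℝ)^2) * (2 / ((2*(p:ℝ)+3)*(2*(p:ℝ)+4)*(2*(p:ℝ)+5)))
        + π^2*(X n u p - n)^2 / (2*(p:ℝ)+3) := by
    intro p
    have h := integral_err (2*p+2) 2 (π^2*(n:ℝ)^2) (π^2*(X n u p - n)^2)
      (fun t => 1 - Real.cos (PH n u p t))
      (continuous_const.sub (Real.continuous_cos.comp (PH_cont n u p)))
      (fun t ht => pt2 n u p ht)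
    rw [Q2] at h
    push_cast at h
    convert h using 3 <;> ring
  have hg : Tendsto (fun p : ℕ =>
      2*π^2*(n:ℝ)^2 * ((2*(p:ℝ)/(2*(p:ℝ)+3)) * (1/(2*(p:ℝ)+4)) * (1/(2*(p:ℝ)+5)))
      + π^2*((n:ℝ)*(1+2*u))^2 * ((1/(2*(p:ℝ)+0)) * (1/(2*(p:ℝ)+3)))) atTop (nhds 0) := by
    have t1 := (((trat 3).mul (tinv 4)).mul (tinv 5)).const_mul (2*π^2*(n:ℝ)^2)
    have t2 := ((tinv 0).mul (tinv 3)).const_mul (π^2*((n:ℝ)*(1+2*u))^2)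
    simpa using t1.add t2
  have hE0 : Tendsto (fun p : ℕ =>
      2*(p:ℝ) * ∫ t in (0:ℝ)..1, (1 - Real.cos (PH n u p t)) * t ^ (2*p+2))
      atTop (nhds 0) := by
    apply squeeze_zero_norm' _ hg
    filter_upwards [eventually_ge_atTop 1] with p hp
    have hp0 : (0:ℝ) < (p:ℝ) := by exact_mod_cast Nat.lt_of_lt_of_le Nat.zero_lt_one hp
    rw [Real.norm_eq_abs, abs_mul, abs_of_nonneg (by positivity : (0:ℝ) ≤ 2*(p:ℝ))]
    calc 2*(p:ℝ) * |∫ t in (0:ℝ)..1, (1 - Real.cos (PH n u p t)) * t ^ (2*p+2)|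
        ≤ 2*(p:ℝ) * ((π^2*(n:ℝ)^2) * (2 / ((2*(p:ℝ)+3)*(2*(p:ℝ)+4)*(2*(p:ℝ)+5)))
            + π^2*(X n u p - n)^2 / (2*(p:ℝ)+3)) :=
          mul_le_mul_of_nonneg_left (hE p) (by positivity)
      _ = _ := by
          rw [X_sub hp]
          have h3 : (2*(p:ℝ)+3) ≠ 0 := by positivity
          have h4 : (2*(p:ℝ)+4) ≠ 0 := by positivity
          have h5 : (2*(p:ℝ)+5) ≠ 0 := by positivity
          have hp' : (p:ℝ) ≠ 0 := ne_of_gt hp0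
          field_simp
          ring
  have hsplit : ∀ p : ℕ, (∫ t in (0:ℝ)..1, Real.cos (PH n u p t) * t ^ (2*p+2))
      = 1/(2*(p:ℝ)+3) - ∫ t in (0:ℝ)..1, (1 - Real.cos (PH n u p t)) * t ^ (2*p+2) := by
    intro p
    have e : (∫ t in (0:ℝ)..1, (1 - Real.cos (PH n u p t)) * t ^ (2*p+2))
        = (∫ t in (0:ℝ)..1, t ^ (2*p+2))
          - ∫ t in (0:ℝ)..1, Real.cos (PH n u p t) * t ^ (2*p+2) := by
      have hc : Continuous fun t:ℝ => Real.cos (PH n u p t) :=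
        Real.continuous_cos.comp (PH_cont n u p)
      rw [← intervalIntegral.integral_sub (g := fun t => Real.cos (PH n u p t) * t ^ (2*p+2))
        ((continuous_pow _).intervalIntegrable _ _)
        ((hc.mul (continuous_pow _)).intervalIntegrable _ _)]
      apply integral_congr; intro t _; ring
    rw [intpow] at e; push_cast at e
    rw [show (1:ℝ)/(2*(p:ℝ)+2+1) = 1/(2*(p:ℝ)+3) by ring] at e
    linarith [e]
  have final := (trat 3).sub hE0
  rw [sub_zero] at final
  apply final.congr
  intro p
  rw [hsplit p]; ring


lemma L4 (n : ℕ) (u : ℝ) :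
    Tendsto (fun p : ℕ =>
      (2*(p:ℝ))^2 * ∫ t in (0:ℝ)..1, Real.sin (PH n u p t) * t ^ (2*p+1))
      atTop (nhds (2*π*(n:ℝ)*u)) := by
  -- main term value
  have hM : ∀ p : ℕ, (∫ t in (0:ℝ)..1, PH n u p t * t ^ (2*p+1))
      = -(π*(n:ℝ)) / ((2*(p:ℝ)+2)*(2*(p:ℝ)+3)) + π*(X n u p - n) / (2*(p:ℝ)+3) := by
    intro p
    rw [integral_congr (g := fun t => ((π*(n:ℝ))*(t-1) + (π*(X n u p - n))*t) * t^(2*p+1))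
      (fun t _ => by rw [PH_eq]), P1]
    push_cast; ring
  -- main term limit
  have hMlim : Tendsto (fun p : ℕ =>
      (2*(p:ℝ))^2 * ∫ t in (0:ℝ)..1, PH n u p t * t ^ (2*p+1))
      atTop (nhds (2*π*(n:ℝ)*u)) := by
    have t1 := ((trat 2).mul (trat 3)).const_mul (-(π*(n:ℝ)))
    have t2 := (trat 3).const_mul (π*((n:ℝ)*(1+2*u)))
    have hsum := t1.add t2
    have hval : -(π*(n:ℝ))*(1*1) + π*((n:ℝ)*(1+2*u))*1 = 2*π*(n:ℝ)*u := by ring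
    rw [hval] at hsum
    apply hsum.congr'
    filter_upwards [eventually_ge_atTop 1] with p hp
    have hp0 : (0:ℝ) < (p:ℝ) := by exact_mod_cast Nat.lt_of_lt_of_le Nat.zero_lt_one hp
    rw [hM p, X_sub hp]
    have h2 : (2*(p:ℝ)+2) ≠ 0 := by positivity
    have h3 : (2*(p:ℝ)+3) ≠ 0 := by positivity
    have hp' : (p:ℝ) ≠ 0 := ne_of_gt hp0
    field_simp
  -- error bound
  have hE : ∀ p : ℕ, |∫ t in (0:ℝ)..1, (Real.sin (PH n u p t) - PH n u p t) * t ^ (2*p+1)|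
      ≤ ((2/3)*π^3*(n:ℝ)^3) * (6 / ((2*(p:ℝ)+2)*(2*(p:ℝ)+3)*(2*(p:ℝ)+4)*(2*(p:ℝ)+5)))
        + (2/3)*π^3*|X n u p - n|^3 / (2*(p:ℝ)+2) := by
    intro p
    have h := integral_err (2*p+1) 3 ((2/3)*π^3*(n:ℝ)^3) ((2/3)*π^3*|X n u p - n|^3)
      (fun t => Real.sin (PH n u p t) - PH n u p t)
      ((Real.continuous_sin.comp (PH_cont n u p)).sub (PH_cont n u p))
      (fun t ht => pt3 n u p ht)
    rw [Q3] at h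
    push_cast at h
    convert h using 3 <;> ring
  have hg : Tendsto (fun p : ℕ =>
      4*π^3*(n:ℝ)^3 * ((2*(p:ℝ)/(2*(p:ℝ)+2)) * (2*(p:ℝ)/(2*(p:ℝ)+3))
          * (1/(2*(p:ℝ)+4)) * (1/(2*(p:ℝ)+5)))
      + (2/3)*π^3*|(n:ℝ)*(1+2*u)|^3 * ((1/(2*(p:ℝ)+0)) * (1/(2*(p:ℝ)+2)))) atTop (nhds 0) := by
    have t1 := ((((trat 2).mul (trat 3)).mul (tinv 4)).mul (tinv 5)).const_mul
      (4*π^3*(n:ℝ)^3)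
    have t2 := ((tinv 0).mul (tinv 2)).const_mul ((2/3)*π^3*|(n:ℝ)*(1+2*u)|^3)
    simpa using t1.add t2
  have hE0 : Tendsto (fun p : ℕ =>
      (2*(p:ℝ))^2 * ∫ t in (0:ℝ)..1, (Real.sin (PH n u p t) - PH n u p t) * t ^ (2*p+1))
      atTop (nhds 0) := by
    apply squeeze_zero_norm' _ hg
    filter_upwards [eventually_ge_atTop 1] with p hp
    have hp0 : (0:ℝ) < (p:ℝ) := by exact_mod_cast Nat.lt_of_lt_of_le Nat.zero_lt_one hp
    rw [Real.norm_eq_abs, abs_mul, abs_of_nonneg (by positivity : (0:ℝ) ≤ (2*(p:ℝ))^2)]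
    calc (2*(p:ℝ))^2 * |∫ t in (0:ℝ)..1, (Real.sin (PH n u p t) - PH n u p t) * t ^ (2*p+1)|
        ≤ (2*(p:ℝ))^2 * (((2/3)*π^3*(n:ℝ)^3)
            * (6 / ((2*(p:ℝ)+2)*(2*(p:ℝ)+3)*(2*(p:ℝ)+4)*(2*(p:ℝ)+5)))
          + (2/3)*π^3*|X n u p - n|^3 / (2*(p:ℝ)+2)) :=
          mul_le_mul_of_nonneg_left (hE p) (by positivity)
      _ = _ := by
          rw [X_sub hp, abs_div, abs_of_pos (by positivity : (0:ℝ) < 2*(p:ℝ))]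
          have h2 : (2*(p:ℝ)+2) ≠ 0 := by positivity
          have h3 : (2*(p:ℝ)+3) ≠ 0 := by positivity
          have h4 : (2*(p:ℝ)+4) ≠ 0 := by positivity
          have h5 : (2*(p:ℝ)+5) ≠ 0 := by positivity
          have hp' : (p:ℝ) ≠ 0 := ne_of_gt hp0
          field_simp
          ring
  -- combine
  have hsp : ∀ p : ℕ, (∫ t in (0:ℝ)..1, Real.sin (PH n u p t) * t ^ (2*p+1))
      = (∫ t in (0:ℝ)..1, PH n u p t * t ^ (2*p+1))
        + ∫ t in (0:ℝ)..1, (Real.sin (PH n u p t) - PH n u p t) * t ^ (2*p+1) := by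
    intro p
    have hc : Continuous fun t:ℝ => Real.sin (PH n u p t) - PH n u p t :=
      (Real.continuous_sin.comp (PH_cont n u p)).sub (PH_cont n u p)
    rw [← intervalIntegral.integral_add (f := fun t => PH n u p t * t ^ (2*p+1))
      (g := fun t => (Real.sin (PH n u p t) - PH n u p t) * t ^ (2*p+1))
      (((PH_cont n u p).mul (continuous_pow _)).intervalIntegrable _ _)
      ((hc.mul (continuous_pow _)).intervalIntegrable _ _)]
    apply integral_congr; intro t _; ring
  have final := hMlim.add hE0
  rw [add_zero] at final
  apply final.congr
  intro p
  rw [hsp p]; ring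

lemma L3 (n : ℕ) (u : ℝ) :
    Tendsto (fun p : ℕ =>
      (2*(p:ℝ))^3 * ∫ t in (0:ℝ)..1, (1 - Real.cos (PH n u p t)) * t ^ (2*p))
      atTop (nhds (π^2*(n:ℝ)^2*(1+4*u^2)/2)) := by
  have hM : ∀ p : ℕ, (∫ t in (0:ℝ)..1, (PH n u p t)^2/2 * t ^ (2*p))
      = (1/2) * (2 * (π*(n:ℝ)) ^ 2 / ((2*(p:ℝ)+1)*(2*(p:ℝ)+2)*(2*(p:ℝ)+3))
        - 2 * (π*(n:ℝ)) * (π*(X n u p - n)) / ((2*(p:ℝ)+2)*(2*(p:ℝ)+3))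
        + (π*(X n u p - n)) ^ 2 / (2*(p:ℝ)+3)) := by
    intro p
    rw [integral_congr
      (g := fun t => (1/2) * (((π*(n:ℝ))*(t-1) + (π*(X n u p - n))*t)^2 * t^(2*p)))
      (fun t _ => by rw [PH_eq]; ring), intervalIntegral.integral_const_mul, P2]
    push_cast; ring
  have hMlim : Tendsto (fun p : ℕ =>
      (2*(p:ℝ))^3 * ∫ t in (0:ℝ)..1, (PH n u p t)^2/2 * t ^ (2*p))
      atTop (nhds (π^2*(n:ℝ)^2*(1+4*u^2)/2)) := by
    have t1 := (((trat 1).mul (trat 2)).mul (trat 3)).const_mul (π^2*(n:ℝ)^2)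
    have t2 := ((trat 2).mul (trat 3)).const_mul (π^2*(n:ℝ)*((n:ℝ)*(1+2*u)))
    have t3 := (trat 3).const_mul ((1/2)*π^2*((n:ℝ)*(1+2*u))^2)
    have hsum := (t1.sub t2).add t3
    have hval : π^2*(n:ℝ)^2*(1*1*1) - π^2*(n:ℝ)*((n:ℝ)*(1+2*u))*(1*1)
        + (1/2)*π^2*((n:ℝ)*(1+2*u))^2*1 = π^2*(n:ℝ)^2*(1+4*u^2)/2 := by ring
    rw [hval] at hsum
    apply hsum.congr'
    filter_upwards [eventually_ge_atTop 1] with p hp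
    have hp0 : (0:ℝ) < (p:ℝ) := by exact_mod_cast Nat.lt_of_lt_of_le Nat.zero_lt_one hp
    rw [hM p, X_sub hp]
    have h1 : (2*(p:ℝ)+1) ≠ 0 := by positivity
    have h2 : (2*(p:ℝ)+2) ≠ 0 := by positivity
    have h3 : (2*(p:ℝ)+3) ≠ 0 := by positivity
    have hp' : (p:ℝ) ≠ 0 := ne_of_gt hp0
    field_simp
  have hE : ∀ p : ℕ, |∫ t in (0:ℝ)..1, ((1 - Real.cos (PH n u p t)) - (PH n u p t)^2/2) * t ^ (2*p)|
      ≤ ((1/3)*π^4*(n:ℝ)^4)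
          * (24 / ((2*(p:ℝ)+1)*(2*(p:ℝ)+2)*(2*(p:ℝ)+3)*(2*(p:ℝ)+4)*(2*(p:ℝ)+5)))
        + (1/3)*π^4*(X n u p - n)^4 / (2*(p:ℝ)+1) := by
    intro p
    have h := integral_err (2*p) 4 ((1/3)*π^4*(n:ℝ)^4) ((1/3)*π^4*(X n u p - n)^4)
      (fun t => (1 - Real.cos (PH n u p t)) - (PH n u p t)^2/2)
      ((continuous_const.sub (Real.continuous_cos.comp (PH_cont n u p))).sub
        (((PH_cont n u p).pow 2).div_const 2))
      (fun t ht => pt4 n u p ht)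
    rw [Q4] at h
    push_cast at h
    convert h using 3 <;> ring
  have hg : Tendsto (fun p : ℕ =>
      8*π^4*(n:ℝ)^4 * ((2*(p:ℝ)/(2*(p:ℝ)+1)) * (2*(p:ℝ)/(2*(p:ℝ)+2)) * (2*(p:ℝ)/(2*(p:ℝ)+3))
          * (1/(2*(p:ℝ)+4)) * (1/(2*(p:ℝ)+5)))
      + (1/3)*π^4*((n:ℝ)*(1+2*u))^4 * ((1/(2*(p:ℝ)+0)) * (1/(2*(p:ℝ)+1)))) atTop (nhds 0) := by
    have t1 := (((((trat 1).mul (trat 2)).mul (trat 3)).mul (tinv 4)).mul (tinv 5)).const_mul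
      (8*π^4*(n:ℝ)^4)
    have t2 := ((tinv 0).mul (tinv 1)).const_mul ((1/3)*π^4*((n:ℝ)*(1+2*u))^4)
    simpa using t1.add t2
  have hE0 : Tendsto (fun p : ℕ =>
      (2*(p:ℝ))^3 * ∫ t in (0:ℝ)..1, ((1 - Real.cos (PH n u p t)) - (PH n u p t)^2/2) * t ^ (2*p))
      atTop (nhds 0) := by
    apply squeeze_zero_norm' _ hg
    filter_upwards [eventually_ge_atTop 1] with p hp
    have hp0 : (0:ℝ) < (p:ℝ) := by exact_mod_cast Nat.lt_of_lt_of_le Nat.zero_lt_one hp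
    rw [Real.norm_eq_abs, abs_mul, abs_of_nonneg (by positivity : (0:ℝ) ≤ (2*(p:ℝ))^3)]
    calc (2*(p:ℝ))^3 * |∫ t in (0:ℝ)..1, ((1 - Real.cos (PH n u p t)) - (PH n u p t)^2/2) * t ^ (2*p)|
        ≤ (2*(p:ℝ))^3 * (((1/3)*π^4*(n:ℝ)^4)
            * (24 / ((2*(p:ℝ)+1)*(2*(p:ℝ)+2)*(2*(p:ℝ)+3)*(2*(p:ℝ)+4)*(2*(p:ℝ)+5)))
          + (1/3)*π^4*(X n u p - n)^4 / (2*(p:ℝ)+1)) :=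
          mul_le_mul_of_nonneg_left (hE p) (by positivity)
      _ = _ := by
          rw [X_sub hp]
          have h1 : (2*(p:ℝ)+1) ≠ 0 := by positivity
          have h2 : (2*(p:ℝ)+2) ≠ 0 := by positivity
          have h3 : (2*(p:ℝ)+3) ≠ 0 := by positivity
          have h4 : (2*(p:ℝ)+4) ≠ 0 := by positivity
          have h5 : (2*(p:ℝ)+5) ≠ 0 := by positivity
          have hp' : (p:ℝ) ≠ 0 := ne_of_gt hp0
          field_simp
          ring
  have hsp : ∀ p : ℕ, (∫ t in (0:ℝ)..1, (1 - Real.cos (PH n u p t)) * t ^ (2*p))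
      = (∫ t in (0:ℝ)..1, (PH n u p t)^2/2 * t ^ (2*p))
        + ∫ t in (0:ℝ)..1, ((1 - Real.cos (PH n u p t)) - (PH n u p t)^2/2) * t ^ (2*p) := by
    intro p
    have hc1 : Continuous fun t:ℝ => (PH n u p t)^2/2 :=
      ((PH_cont n u p).pow 2).div_const 2
    have hc2 : Continuous fun t:ℝ => (1 - Real.cos (PH n u p t)) - (PH n u p t)^2/2 :=
      (continuous_const.sub (Real.continuous_cos.comp (PH_cont n u p))).sub hc1
    rw [← intervalIntegral.integral_add (f := fun t => (PH n u p t)^2/2 * t ^ (2*p))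
      (g := fun t => ((1 - Real.cos (PH n u p t)) - (PH n u p t)^2/2) * t ^ (2*p))
      ((hc1.mul (continuous_pow _)).intervalIntegrable _ _)
      ((hc2.mul (continuous_pow _)).intervalIntegrable _ _)]
    apply integral_congr; intro t _; ring
  have final := hMlim.add hE0
  rw [add_zero] at final
  apply final.congr
  intro p
  rw [hsp p]; ring


lemma A3_eq (n : ℕ) (u : ℝ) (p : ℕ) :
    (∫ t in (0:ℝ)..1, Real.cos (PH n u p t) * t ^ (2*p))
      = 1/(2*(p:ℝ)+1) - ∫ t in (0:ℝ)..1, (1 - Real.cos (PH n u p t)) * t ^ (2*p) := by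
  have hc : Continuous fun t:ℝ => Real.cos (PH n u p t) :=
    Real.continuous_cos.comp (PH_cont n u p)
  have e : (∫ t in (0:ℝ)..1, (1 - Real.cos (PH n u p t)) * t ^ (2*p))
      = (∫ t in (0:ℝ)..1, t ^ (2*p))
        - ∫ t in (0:ℝ)..1, Real.cos (PH n u p t) * t ^ (2*p) := by
    rw [← intervalIntegral.integral_sub (g := fun t => Real.cos (PH n u p t) * t ^ (2*p))
      ((continuous_pow _).intervalIntegrable _ _)
      ((hc.mul (continuous_pow _)).intervalIntegrable _ _)]
    apply integral_congr; intro t _; ring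
  rw [intpow] at e; push_cast at e; linarith [e]

lemma S3 (n : ℕ) (u : ℝ) :
    Tendsto (fun p : ℕ => 2*(p:ℝ) * ∫ t in (0:ℝ)..1, Real.cos (PH n u p t) * t ^ (2*p))
      atTop (nhds 1) := by
  have h := ((L3 n u).mul (tinv 0)).mul (tinv 0)
  rw [mul_zero] at h
  have main := (trat 1).sub h
  rw [sub_zero] at main
  apply main.congr'
  filter_upwards [eventually_ge_atTop 1] with p hp
  have hp0 : (0:ℝ) < (p:ℝ) := by exact_mod_cast Nat.lt_of_lt_of_le Nat.zero_lt_one hp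
  rw [A3_eq n u p]
  have h1 : (2*(p:ℝ)+1) ≠ 0 := by positivity
  have hp' : (p:ℝ) ≠ 0 := ne_of_gt hp0
  field_simp
  ring

lemma g3_eq (n : ℕ) (u : ℝ) (p : ℕ) :
    (∫ t in (0:ℝ)..1, Real.cos (π * ((n:ℝ)*(1 + 1/(2*(p:ℝ)) + u/(p:ℝ))) * t) * t ^ (2*p))
      = (-1:ℝ)^n * ∫ t in (0:ℝ)..1, Real.cos (PH n u p t) * t ^ (2*p) := by
  rw [← intervalIntegral.integral_const_mul]
  apply integral_congr
  intro t _
  dsimp only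
  rw [show π * ((n:ℝ)*(1 + 1/(2*(p:ℝ)) + u/(p:ℝ))) * t = (n:ℝ)*π - (-(PH n u p t)) by
    unfold PH X; ring, Real.cos_nat_mul_pi_sub, Real.cos_neg]
  ring

lemma g5_eq (n : ℕ) (u : ℝ) (p : ℕ) :
    (∫ t in (0:ℝ)..1, Real.cos (π * ((n:ℝ)*(1 + 1/(2*(p:ℝ)) + u/(p:ℝ))) * t) * t ^ (2*p+2))
      = (-1:ℝ)^n * ∫ t in (0:ℝ)..1, Real.cos (PH n u p t) * t ^ (2*p+2) := by
  rw [← intervalIntegral.integral_const_mul]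
  apply integral_congr
  intro t _
  dsimp only
  rw [show π * ((n:ℝ)*(1 + 1/(2*(p:ℝ)) + u/(p:ℝ))) * t = (n:ℝ)*π - (-(PH n u p t)) by
    unfold PH X; ring, Real.cos_nat_mul_pi_sub, Real.cos_neg]
  ring

lemma g4_eq (n : ℕ) (u : ℝ) (p : ℕ) :
    (∫ t in (0:ℝ)..1, Real.sin (π * ((n:ℝ)*(1 + 1/(2*(p:ℝ)) + u/(p:ℝ))) * t) * t ^ (2*p+1))
      = (-1:ℝ)^n * ∫ t in (0:ℝ)..1, Real.sin (PH n u p t) * t ^ (2*p+1) := by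
  rw [← intervalIntegral.integral_const_mul]
  apply integral_congr
  intro t _
  dsimp only
  rw [show π * ((n:ℝ)*(1 + 1/(2*(p:ℝ)) + u/(p:ℝ))) * t = (n:ℝ)*π - (-(PH n u p t)) by
    unfold PH X; ring, Real.sin_nat_mul_pi_sub, Real.sin_neg]
  ring


end BpAux


open BpAux

theorem Bp_peak_asymptotic (n : ℕ) (hn : 1 ≤ n) (u : ℝ) :
    Tendsto (fun p : ℕ =>
      let x : ℝ := (n : ℝ) * (1 + 1 / (2 * p) + u / p)
      let g3 : ℝ := ∫ t in (0 : ℝ)..1, Real.cos (π * x * t) * t ^ (2 * p)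
      let g4 : ℝ := ∫ t in (0 : ℝ)..1, Real.sin (π * x * t) * t ^ (2 * p + 1)
      let g5 : ℝ := ∫ t in (0 : ℝ)..1, Real.cos (π * x * t) * t ^ (2 * p + 2)
      let C : ℝ := (1 / (2 * (p : ℝ) + 1)) ^ 2 - g3 ^ 2
      (p : ℝ) ^ 5 * (g5 * C - g3 * g4 ^ 2))
      atTop (nhds ((-1 : ℝ) ^ n * (π ^ 2 / 32) * (n : ℝ) ^ 2)) := by
  have hG := ((((L5 n u).mul (L3 n u)).mul ((trat 1).add (S3 n u))).sub
    ((S3 n u).mul ((L4 n u).pow 2))).const_mul (1/32 : ℝ)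
  have hval : (1/32 : ℝ) * ((1 * (π^2*(n:ℝ)^2*(1+4*u^2)/2)) * (1 + 1) - 1 * (2*π*(n:ℝ)*u)^2)
      = π^2*(n:ℝ)^2/32 := by ring
  rw [hval] at hG
  have hfinal := hG.const_mul ((-1:ℝ)^n)
  have hval2 : ((-1:ℝ)^n) * (π^2*(n:ℝ)^2/32) = (-1:ℝ)^n * (π^2/32) * (n:ℝ)^2 := by ring
  rw [hval2] at hfinal
  refine hfinal.congr fun p => ?_
  dsimp only
  rw [g3_eq n u p, g4_eq n u p, g5_eq n u p, A3_eq n u p]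
  have h1 : (2*(p:ℝ)+1) ≠ 0 := by positivity
  rcases Nat.even_or_odd n with he | he
  · rw [he.neg_one_pow]
    field_simp
    ring
  · rw [he.neg_one_pow]
    field_simp
    ring
end

section
/- With R_{2,p} as in the Bogomolny–Bohigas–Lebœuf formula, for each fixed p, R_{2,p}(x)/x → π^2 sqrt(4p^2+8p+3) / (2(2p+3)^2(2p+5)) as x → 0⁺; in particular the repulsion between real zeros of F^{(p)} is linear for every p. -/
open Real Filter Set intervalIntegral

namespace LinRep

lemma nonneg_of_deriv {f f' : ℝ → ℝ} (hd : ∀ y, HasDerivAt f (f' y) y)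
    (h0 : f 0 = 0) (hf' : ∀ y, 0 ≤ y → 0 ≤ f' y) {y : ℝ} (hy : 0 ≤ y) : 0 ≤ f y := by
  have hm : MonotoneOn f (Set.Ici 0) :=
    monotoneOn_of_deriv_nonneg (convex_Ici 0)
      (fun z _ => (hd z).continuousAt.continuousWithinAt)
      (fun z hz => (hd z).differentiableAt.differentiableWithinAt)
      (fun z hz => by
        rw [(hd z).deriv]
        exact hf' z (le_of_lt (by simpa [interior_Ici] using hz)))
  calc (0:ℝ) = f 0 := h0.symm
    _ ≤ f y := hm self_mem_Ici hy hy

lemma sin_ge_t3 {y : ℝ} (hy : 0 ≤ y) : y - y ^ 3 / 6 ≤ sin y := by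
  have := nonneg_of_deriv (f := fun y => Real.sin y - y + y ^ 3 / 6)
    (f' := fun y => Real.cos y - 1 + y ^ 2 / 2) (fun z => by
      have h := ((Real.hasDerivAt_sin z).sub (hasDerivAt_id z)).add
        ((hasDerivAt_pow 3 z).div_const 6)
      refine h.congr_deriv ?_
      push_cast; ring) (by simp) (fun z _ => by nlinarith [Real.one_sub_sq_div_two_le_cos (x := z)]) hy
  linarith

lemma cos_le_t4 {y : ℝ} (hy : 0 ≤ y) : cos y ≤ 1 - y ^ 2 / 2 + y ^ 4 / 24 := by
  have := nonneg_of_deriv (f := fun y => 1 - y ^ 2 / 2 + y ^ 4 / 24 - Real.cos y)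
    (f' := fun y => -y + y ^ 3 / 6 + Real.sin y) (fun z => by
      have h := (((hasDerivAt_const z (1:ℝ)).sub ((hasDerivAt_pow 2 z).div_const 2)).add
        ((hasDerivAt_pow 4 z).div_const 24)).sub (Real.hasDerivAt_cos z)
      refine h.congr_deriv ?_
      push_cast; ring) (by simp) (fun z hz => by nlinarith [sin_ge_t3 hz]) hy
  linarith

lemma sin_le_t5 {y : ℝ} (hy : 0 ≤ y) : sin y ≤ y - y ^ 3 / 6 + y ^ 5 / 120 := by
  have := nonneg_of_deriv (f := fun y => y - y ^ 3 / 6 + y ^ 5 / 120 - Real.sin y)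
    (f' := fun y => 1 - y ^ 2 / 2 + y ^ 4 / 24 - Real.cos y) (fun z => by
      have h := (((hasDerivAt_id z).sub ((hasDerivAt_pow 3 z).div_const 6)).add
        ((hasDerivAt_pow 5 z).div_const 120)).sub (Real.hasDerivAt_sin z)
      refine h.congr_deriv ?_
      push_cast; ring) (by simp) (fun z hz => by nlinarith [cos_le_t4 hz]) hy
  linarith

lemma cos_ge_t6 {y : ℝ} (hy : 0 ≤ y) : 1 - y ^ 2 / 2 + y ^ 4 / 24 - y ^ 6 / 720 ≤ cos y := by
  have := nonneg_of_deriv (f := fun y => Real.cos y - (1 - y ^ 2 / 2 + y ^ 4 / 24 - y ^ 6 / 720))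
    (f' := fun y => y - y ^ 3 / 6 + y ^ 5 / 120 - Real.sin y) (fun z => by
      have h := (Real.hasDerivAt_cos z).sub ((((hasDerivAt_const z (1:ℝ)).sub
        ((hasDerivAt_pow 2 z).div_const 2)).add ((hasDerivAt_pow 4 z).div_const 24)).sub
        ((hasDerivAt_pow 6 z).div_const 720))
      refine h.congr_deriv ?_
      push_cast; ring) (by simp) (fun z hz => by nlinarith [sin_le_t5 hz]) hy
  linarith

end LinRep

open Real Filter Set intervalIntegral

namespace LinRep2

lemma int_mono (c : ℝ) (m : ℕ) : ∫ t in (0:ℝ)..1, c * t ^ m = c / (m + 1) := by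
  rw [intervalIntegral.integral_const_mul, integral_pow]
  norm_num
  rw [div_eq_mul_inv]

lemma ii_poly4 (c0 c2 c4 c6 : ℝ) (n : ℕ) : IntervalIntegrable (fun t : ℝ =>
    c0 * t ^ n + c2 * t ^ (n+2) + c4 * t ^ (n+4) + c6 * t ^ (n+6))
    MeasureTheory.volume 0 1 := by
  apply Continuous.intervalIntegrable
  continuity

lemma ii_cos (x : ℝ) (n : ℕ) : IntervalIntegrable (fun t : ℝ => Real.cos (π*x*t) * t ^ n)
    MeasureTheory.volume 0 1 := by
  apply Continuous.intervalIntegrable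
  exact (Real.continuous_cos.comp (continuous_const.mul continuous_id)).mul (continuous_pow n)

lemma ii_sin (x : ℝ) (n : ℕ) : IntervalIntegrable (fun t : ℝ => Real.sin (π*x*t) * t ^ n)
    MeasureTheory.volume 0 1 := by
  apply Continuous.intervalIntegrable
  exact (Real.continuous_sin.comp (continuous_const.mul continuous_id)).mul (continuous_pow n)

lemma int_c4 (c0 c2 c4 c6 : ℝ) (n : ℕ) :
    ∫ t in (0:ℝ)..1, (c0 * t ^ n + c2 * t ^ (n+2) + c4 * t ^ (n+4) + c6 * t ^ (n+6))
      = c0 / (n + 1) + c2 / (n + 3) + c4 / (n + 5) + c6 / (n + 7) := by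
  have ii : ∀ (c : ℝ) (m : ℕ), IntervalIntegrable (fun t => c * t ^ m) MeasureTheory.volume (0:ℝ) 1 :=
    fun c m => (continuous_const.mul (continuous_pow m)).intervalIntegrable 0 1
  rw [intervalIntegral.integral_add (((ii c0 n).add (ii c2 (n+2))).add (ii c4 (n+4))) (ii c6 (n+6)),
    intervalIntegral.integral_add ((ii c0 n).add (ii c2 (n+2))) (ii c4 (n+4)),
    intervalIntegral.integral_add (ii c0 n) (ii c2 (n+2)),
    int_mono, int_mono, int_mono, int_mono]
  push_cast
  ring

noncomputable def G3 (p : ℕ) (x : ℝ) : ℝ := ∫ t in (0:ℝ)..1, Real.cos (π * x * t) * t ^ (2 * p)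
noncomputable def G4 (p : ℕ) (x : ℝ) : ℝ := ∫ t in (0:ℝ)..1, Real.sin (π * x * t) * t ^ (2 * p + 1)
noncomputable def G5 (p : ℕ) (x : ℝ) : ℝ := ∫ t in (0:ℝ)..1, Real.cos (π * x * t) * t ^ (2 * p + 2)

noncomputable def P3 (p : ℕ) (x : ℝ) : ℝ :=
  1 / (2*(p:ℝ)+1) - π^2*x^2/2 / (2*(p:ℝ)+3) + π^4*x^4/24 / (2*(p:ℝ)+5)
noncomputable def P4 (p : ℕ) (x : ℝ) : ℝ :=
  π*x / (2*(p:ℝ)+3) - π^3*x^3/6 / (2*(p:ℝ)+5)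
noncomputable def P5 (p : ℕ) (x : ℝ) : ℝ :=
  1 / (2*(p:ℝ)+3) - π^2*x^2/2 / (2*(p:ℝ)+5)

lemma err_le (p : ℕ) {v d : ℝ} (hv : 0 ≤ v) (hd : 1 ≤ d) : v / d / (2*(p:ℝ)+7) ≤ v := by
  have hp : (0:ℝ) ≤ (p:ℝ) := Nat.cast_nonneg p
  rw [div_div]
  apply div_le_self hv
  nlinarith

lemma G3_bound (p : ℕ) {x : ℝ} (hx : 0 < x) : |G3 p x - P3 p x| ≤ π ^ 6 * x ^ 6 := by
  have hp : (0:ℝ) ≤ (p:ℝ) := Nat.cast_nonneg p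
  have hic := ii_cos x (2*p)
  have hup : G3 p x ≤ P3 p x := by
    have key := intervalIntegral.integral_mono_on (by norm_num) hic
        (ii_poly4 1 (-(π^2*x^2/2)) (π^4*x^4/24) 0 (2*p))
        (fun t ht => by
          have hy : 0 ≤ π * x * t := mul_nonneg (mul_nonneg pi_pos.le hx.le) ht.1
          calc Real.cos (π*x*t) * t ^ (2*p)
              ≤ (1 - (π*x*t)^2/2 + (π*x*t)^4/24) * t ^ (2*p) :=
                mul_le_mul_of_nonneg_right (LinRep.cos_le_t4 hy) (pow_nonneg ht.1 _)
            _ = 1 * t ^ (2*p) + (-(π^2*x^2/2)) * t ^ (2*p+2) + (π^4*x^4/24) * t ^ (2*p+4)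
                + (0:ℝ) * t ^ (2*p+6) := by ring)
    rw [int_c4] at key
    push_cast at key
    simp only [neg_div, zero_div] at key
    unfold G3 P3
    linarith
  have hlow : P3 p x - π^6*x^6/720 / (2*(p:ℝ)+7) ≤ G3 p x := by
    have key := intervalIntegral.integral_mono_on (by norm_num)
        (ii_poly4 1 (-(π^2*x^2/2)) (π^4*x^4/24) (-(π^6*x^6/720)) (2*p)) hic
        (fun t ht => by
          have hy : 0 ≤ π * x * t := mul_nonneg (mul_nonneg pi_pos.le hx.le) ht.1
          calc 1 * t ^ (2*p) + (-(π^2*x^2/2)) * t ^ (2*p+2) + (π^4*x^4/24) * t ^ (2*p+4)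
                + (-(π^6*x^6/720)) * t ^ (2*p+6)
              = (1 - (π*x*t)^2/2 + (π*x*t)^4/24 - (π*x*t)^6/720) * t ^ (2*p) := by ring
            _ ≤ Real.cos (π*x*t) * t ^ (2*p) :=
                mul_le_mul_of_nonneg_right (LinRep.cos_ge_t6 hy) (pow_nonneg ht.1 _))
    rw [int_c4] at key
    push_cast at key
    simp only [neg_div, zero_div] at key
    unfold G3 P3
    linarith
  have herr : π^6*x^6/720 / (2*(p:ℝ)+7) ≤ π^6*x^6 := err_le p (by positivity) (by norm_num)
  rw [abs_le]
  constructor <;> nlinarith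

end LinRep2

namespace LinRep2

lemma G4_bound (p : ℕ) {x : ℝ} (hx : 0 < x) : |G4 p x - P4 p x| ≤ π ^ 5 * x ^ 5 := by
  have hp : (0:ℝ) ≤ (p:ℝ) := Nat.cast_nonneg p
  have hic := ii_sin x (2*p+1)
  have hup : G4 p x ≤ P4 p x + π^5*x^5/120 / (2*(p:ℝ)+7) := by
    have key := intervalIntegral.integral_mono_on (by norm_num) hic
        (ii_poly4 (π*x) (-(π^3*x^3/6)) (π^5*x^5/120) 0 (2*p+2))
        (fun t ht => by
          have hy : 0 ≤ π * x * t := mul_nonneg (mul_nonneg pi_pos.le hx.le) ht.1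
          calc Real.sin (π*x*t) * t ^ (2*p+1)
              ≤ ((π*x*t) - (π*x*t)^3/6 + (π*x*t)^5/120) * t ^ (2*p+1) :=
                mul_le_mul_of_nonneg_right (LinRep.sin_le_t5 hy) (pow_nonneg ht.1 _)
            _ = (π*x) * t ^ (2*p+2) + (-(π^3*x^3/6)) * t ^ (2*p+2+2)
                + (π^5*x^5/120) * t ^ (2*p+2+4) + (0:ℝ) * t ^ (2*p+2+6) := by ring)
    rw [int_c4] at key
    push_cast at key
    simp only [neg_div, zero_div] at key
    rw [show (2*(p:ℝ)+2+1) = 2*(p:ℝ)+3 from by ring,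
      show (2*(p:ℝ)+2+3) = 2*(p:ℝ)+5 from by ring] at key
    first
      | (rw [show (2*(p:ℝ)+2+5) = 2*(p:ℝ)+7 from by ring] at key; unfold G4 P4; linarith)
      | (unfold G4 P4; linarith)
  have hlow : P4 p x ≤ G4 p x := by
    have key := intervalIntegral.integral_mono_on (by norm_num)
        (ii_poly4 (π*x) (-(π^3*x^3/6)) 0 0 (2*p+2)) hic
        (fun t ht => by
          have hy : 0 ≤ π * x * t := mul_nonneg (mul_nonneg pi_pos.le hx.le) ht.1
          calc (π*x) * t ^ (2*p+2) + (-(π^3*x^3/6)) * t ^ (2*p+2+2)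
                + (0:ℝ) * t ^ (2*p+2+4) + (0:ℝ) * t ^ (2*p+2+6)
              = ((π*x*t) - (π*x*t)^3/6) * t ^ (2*p+1) := by ring
            _ ≤ Real.sin (π*x*t) * t ^ (2*p+1) :=
                mul_le_mul_of_nonneg_right (LinRep.sin_ge_t3 hy) (pow_nonneg ht.1 _))
    rw [int_c4] at key
    push_cast at key
    simp only [neg_div, zero_div] at key
    rw [show (2*(p:ℝ)+2+1) = 2*(p:ℝ)+3 from by ring,
      show (2*(p:ℝ)+2+3) = 2*(p:ℝ)+5 from by ring] at key
    first
      | (rw [show (2*(p:ℝ)+2+5) = 2*(p:ℝ)+7 from by ring] at key; unfold G4 P4; linarith)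
      | (unfold G4 P4; linarith)
  have herr : π^5*x^5/120 / (2*(p:ℝ)+7) ≤ π^5*x^5 := err_le p (by positivity) (by norm_num)
  rw [abs_le]
  constructor <;> nlinarith

lemma G5_bound (p : ℕ) {x : ℝ} (hx : 0 < x) : |G5 p x - P5 p x| ≤ π ^ 4 * x ^ 4 := by
  have hp : (0:ℝ) ≤ (p:ℝ) := Nat.cast_nonneg p
  have hic := ii_cos x (2*p+2)
  have hup : G5 p x ≤ P5 p x + π^4*x^4/24 / (2*(p:ℝ)+7) := by
    have key := intervalIntegral.integral_mono_on (by norm_num) hic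
        (ii_poly4 1 (-(π^2*x^2/2)) (π^4*x^4/24) 0 (2*p+2))
        (fun t ht => by
          have hy : 0 ≤ π * x * t := mul_nonneg (mul_nonneg pi_pos.le hx.le) ht.1
          calc Real.cos (π*x*t) * t ^ (2*p+2)
              ≤ (1 - (π*x*t)^2/2 + (π*x*t)^4/24) * t ^ (2*p+2) :=
                mul_le_mul_of_nonneg_right (LinRep.cos_le_t4 hy) (pow_nonneg ht.1 _)
            _ = 1 * t ^ (2*p+2) + (-(π^2*x^2/2)) * t ^ (2*p+2+2)
                + (π^4*x^4/24) * t ^ (2*p+2+4) + (0:ℝ) * t ^ (2*p+2+6) := by ring)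
    rw [int_c4] at key
    push_cast at key
    simp only [neg_div, zero_div] at key
    rw [show (2*(p:ℝ)+2+1) = 2*(p:ℝ)+3 from by ring,
      show (2*(p:ℝ)+2+3) = 2*(p:ℝ)+5 from by ring] at key
    first
      | (rw [show (2*(p:ℝ)+2+5) = 2*(p:ℝ)+7 from by ring] at key; unfold G5 P5; linarith)
      | (unfold G5 P5; linarith)
  have hlow : P5 p x ≤ G5 p x := by
    have key := intervalIntegral.integral_mono_on (by norm_num)
        (ii_poly4 1 (-(π^2*x^2/2)) 0 0 (2*p+2)) hic
        (fun t ht => by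
          calc 1 * t ^ (2*p+2) + (-(π^2*x^2/2)) * t ^ (2*p+2+2)
                + (0:ℝ) * t ^ (2*p+2+4) + (0:ℝ) * t ^ (2*p+2+6)
              = (1 - (π*x*t)^2/2) * t ^ (2*p+2) := by ring
            _ ≤ Real.cos (π*x*t) * t ^ (2*p+2) :=
                mul_le_mul_of_nonneg_right Real.one_sub_sq_div_two_le_cos (pow_nonneg ht.1 _))
    rw [int_c4] at key
    push_cast at key
    simp only [neg_div, zero_div] at key
    rw [show (2*(p:ℝ)+2+1) = 2*(p:ℝ)+3 from by ring,
      show (2*(p:ℝ)+2+3) = 2*(p:ℝ)+5 from by ring] at key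
    first
      | (rw [show (2*(p:ℝ)+2+5) = 2*(p:ℝ)+7 from by ring] at key; unfold G5 P5; linarith)
      | (unfold G5 P5; linarith)
  have herr : π^4*x^4/24 / (2*(p:ℝ)+7) ≤ π^4*x^4 := err_le p (by positivity) (by norm_num)
  rw [abs_le]
  constructor <;> nlinarith

end LinRep2

open Real Filter Set intervalIntegral

namespace LinRep3
open LinRep LinRep2

noncomputable def CC (p : ℕ) (x : ℝ) : ℝ := (1 / (2*(p:ℝ)+1))^2 - (G3 p x)^2
noncomputable def AA (p : ℕ) (x : ℝ) : ℝ := 1 / (2*(p:ℝ)+3) * CC p x - 1 / (2*(p:ℝ)+1) * (G4 p x)^2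
noncomputable def BB (p : ℕ) (x : ℝ) : ℝ := G5 p x * CC p x - G3 p x * (G4 p x)^2

noncomputable def QA (p : ℕ) (u : ℝ) : ℝ :=
  1/(24*(2*(p:ℝ)+3)^2*(2*(p:ℝ)+5)) - 1/(36*(2*(p:ℝ)+1)*(2*(p:ℝ)+5)^2)
    - u^2/(576*(2*(p:ℝ)+3)*(2*(p:ℝ)+5)^2)
noncomputable def QB (p : ℕ) (u : ℝ) : ℝ :=
  -(1/(24*(2*(p:ℝ)+3)^2*(2*(p:ℝ)+5))) + 1/(72*(2*(p:ℝ)+1)*(2*(p:ℝ)+5)^2)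
    + u^2/(192*(2*(p:ℝ)+3)*(2*(p:ℝ)+5)^2) - u^4/(3456*(2*(p:ℝ)+5)^3)
noncomputable def QC (p : ℕ) (u : ℝ) : ℝ :=
  -(1/(4*(2*(p:ℝ)+3)^2) + 1/(12*(2*(p:ℝ)+1)*(2*(p:ℝ)+5)))
    + u^2/(24*(2*(p:ℝ)+3)*(2*(p:ℝ)+5)) - u^4/(576*(2*(p:ℝ)+5)^2)

noncomputable def p3b (x : ℝ) : ℝ := 1 + π^2*x^2/2 + π^4*x^4/24
noncomputable def q4 (x : ℝ) : ℝ := π + π^3*x^2/6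
noncomputable def p5b (x : ℝ) : ℝ := 1 + π^2*x^2/2
noncomputable def ccb (p : ℕ) (x : ℝ) : ℝ :=
  π^2 + π^4*x^2*|QC p (π*x)| + 2*p3b x*π^6*x^4 + π^12*x^10

noncomputable def HA (p : ℕ) (x : ℝ) : ℝ :=
  π^6*x^2*|QA p (π*x)| + (2*p3b x*π^6*x^2 + π^12*x^8) + (2*q4 x*π^5*x^2 + π^10*x^6)
noncomputable def HB (p : ℕ) (x : ℝ) : ℝ :=
  π^6*x^2*|QB p (π*x)| + π^4*x^2*ccb p x + p5b x*(2*p3b x*π^6*x^2 + π^12*x^8)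
    + p3b x*(2*q4 x*π^5*x^2 + π^10*x^6) + π^6*x^4*(q4 x + π^5*x^4)^2
noncomputable def HC (p : ℕ) (x : ℝ) : ℝ :=
  π^4*x^2*|QC p (π*x)| + 2*p3b x*π^6*x^4 + π^12*x^10

lemma hp0 (p : ℕ) : (0:ℝ) ≤ (p:ℝ) := Nat.cast_nonneg p

lemma idA (p : ℕ) (x : ℝ) :
    AA p x - π^4/((2*(p:ℝ)+1)*(2*(p:ℝ)+3)^3*(2*(p:ℝ)+5))*x^4
    = π^6*x^6*QA p (π*x)
      + (-(1/(2*(p:ℝ)+3)))*(2*P3 p x*(G3 p x - P3 p x) + (G3 p x - P3 p x)^2)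
      + (-(1/(2*(p:ℝ)+1)))*(2*P4 p x*(G4 p x - P4 p x) + (G4 p x - P4 p x)^2) := by
  have h1 : (2*(p:ℝ)+1) ≠ 0 := by positivity
  have h3 : (2*(p:ℝ)+3) ≠ 0 := by positivity
  have h5 : (2*(p:ℝ)+5) ≠ 0 := by positivity
  unfold AA CC QA P3 P4
  field_simp
  ring

lemma idB (p : ℕ) (x : ℝ) :
    BB p x + π^4/((2*(p:ℝ)+1)*(2*(p:ℝ)+3)^3*(2*(p:ℝ)+5))*x^4
    = π^6*x^6*QB p (π*x)
      + (G5 p x - P5 p x)*CC p x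
      + P5 p x*(-(2*P3 p x*(G3 p x - P3 p x)) - (G3 p x - P3 p x)^2)
      - P3 p x*(2*P4 p x*(G4 p x - P4 p x) + (G4 p x - P4 p x)^2)
      - (G3 p x - P3 p x)*(P4 p x + (G4 p x - P4 p x))^2 := by
  have h1 : (2*(p:ℝ)+1) ≠ 0 := by positivity
  have h3 : (2*(p:ℝ)+3) ≠ 0 := by positivity
  have h5 : (2*(p:ℝ)+5) ≠ 0 := by positivity
  unfold BB CC QB P3 P4 P5
  field_simp
  ring

lemma idC (p : ℕ) (x : ℝ) :
    CC p x - π^2/((2*(p:ℝ)+1)*(2*(p:ℝ)+3))*x^2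
    = π^4*x^4*QC p (π*x) + (-(2*P3 p x*(G3 p x - P3 p x)) - (G3 p x - P3 p x)^2) := by
  have h1 : (2*(p:ℝ)+1) ≠ 0 := by positivity
  have h3 : (2*(p:ℝ)+3) ≠ 0 := by positivity
  have h5 : (2*(p:ℝ)+5) ≠ 0 := by positivity
  unfold CC QC P3
  field_simp
  ring

end LinRep3

open Real Filter Set intervalIntegral

namespace LinRep3
open LinRep LinRep2

lemma prod_bound {u v U V : ℝ} (hu : |u| ≤ U) (hv : |v| ≤ V) : |u*v| ≤ U*V := by
  rw [abs_mul]
  exact mul_le_mul hu hv (abs_nonneg v) ((abs_nonneg u).trans hu)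

lemma abs_le3 {t1 t2 t3 b1 b2 b3 : ℝ} (h1 : |t1| ≤ b1) (h2 : |t2| ≤ b2) (h3 : |t3| ≤ b3) :
    |t1 + t2 + t3| ≤ b1 + b2 + b3 := by
  have := abs_add_le (t1 + t2) t3
  have := abs_add_le t1 t2
  linarith

lemma abs_le5 {t1 t2 t3 t4 t5 b1 b2 b3 b4 b5 : ℝ} (h1 : |t1| ≤ b1) (h2 : |t2| ≤ b2)
    (h3 : |t3| ≤ b3) (h4 : |t4| ≤ b4) (h5 : |t5| ≤ b5) :
    |t1 + t2 + t3 - t4 - t5| ≤ b1 + b2 + b3 + b4 + b5 := by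
  have a1 := abs_sub (t1 + t2 + t3 - t4) t5
  have a2 := abs_sub (t1 + t2 + t3) t4
  have a3 := abs_add_le (t1 + t2) t3
  have a4 := abs_add_le t1 t2
  linarith

lemma one_div_le_one (d : ℝ) (hd : 1 ≤ d) : |1/d| ≤ 1 := by
  rw [abs_of_nonneg (by positivity)]
  rw [div_le_one (by linarith)]
  exact hd

lemma P3_abs (p : ℕ) (x : ℝ) : |P3 p x| ≤ p3b x := by
  have hp := hp0 p
  have i1 : |1/(2*(p:ℝ)+1)| ≤ 1 := one_div_le_one _ (by linarith)
  have i2 : |π^2*x^2/2/(2*(p:ℝ)+3)| ≤ π^2*x^2/2 := by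
    rw [abs_of_nonneg (by positivity)]
    exact div_le_self (by positivity) (by linarith)
  have i3 : |π^4*x^4/24/(2*(p:ℝ)+5)| ≤ π^4*x^4/24 := by
    rw [abs_of_nonneg (by positivity)]
    exact div_le_self (by positivity) (by linarith)
  unfold P3 p3b
  have := abs_sub (1/(2*(p:ℝ)+1)) (π^2*x^2/2/(2*(p:ℝ)+3))
  have := abs_add_le (1/(2*(p:ℝ)+1) - π^2*x^2/2/(2*(p:ℝ)+3)) (π^4*x^4/24/(2*(p:ℝ)+5))
  linarith

lemma P4_abs (p : ℕ) {x : ℝ} (hx : 0 < x) : |P4 p x| ≤ x * q4 x := by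
  have hp := hp0 p
  have i1 : |π*x/(2*(p:ℝ)+3)| ≤ π*x := by
    rw [abs_of_nonneg (by positivity)]
    exact div_le_self (by positivity) (by linarith)
  have i2 : |π^3*x^3/6/(2*(p:ℝ)+5)| ≤ π^3*x^3/6 := by
    rw [abs_of_nonneg (by positivity)]
    exact div_le_self (by positivity) (by linarith)
  unfold P4 q4
  have := abs_sub (π*x/(2*(p:ℝ)+3)) (π^3*x^3/6/(2*(p:ℝ)+5))
  nlinarith
lemma P5_abs (p : ℕ) (x : ℝ) : |P5 p x| ≤ p5b x := by
  have hp := hp0 p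
  have i1 : |1/(2*(p:ℝ)+3)| ≤ 1 := one_div_le_one _ (by linarith)
  have i2 : |π^2*x^2/2/(2*(p:ℝ)+5)| ≤ π^2*x^2/2 := by
    rw [abs_of_nonneg (by positivity)]
    exact div_le_self (by positivity) (by linarith)
  unfold P5 p5b
  have := abs_sub (1/(2*(p:ℝ)+3)) (π^2*x^2/2/(2*(p:ℝ)+5))
  linarith

lemma err3_sq {x e : ℝ} (he : |e| ≤ π^6*x^6) : |e^2| ≤ π^12*x^12 := by
  rw [abs_pow]
  calc |e|^2 ≤ (π^6*x^6)^2 := by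
        exact pow_le_pow_left₀ (abs_nonneg e) he 2
    _ = π^12*x^12 := by ring

lemma CC_abs (p : ℕ) {x : ℝ} (hx : 0 < x) : |CC p x| ≤ x^2 * ccb p x := by
  have hp := hp0 p
  have he3 := G3_bound p hx
  have hP3 := P3_abs p x
  have hγ : |π^2/((2*(p:ℝ)+1)*(2*(p:ℝ)+3))*x^2| ≤ π^2*x^2 := by
    rw [div_mul_eq_mul_div, abs_of_nonneg (by positivity)]
    exact div_le_self (by positivity) (by nlinarith)
  have h1 : |π^4*x^4*QC p (π*x)| = π^4*x^4*|QC p (π*x)| := by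
    rw [abs_mul, abs_of_nonneg (by positivity : (0:ℝ) ≤ π^4*x^4)]
  have h2 : |2*P3 p x*(G3 p x - P3 p x)| ≤ 2*(p3b x*(π^6*x^6)) := by
    rw [show 2*P3 p x*(G3 p x - P3 p x) = 2*(P3 p x*(G3 p x - P3 p x)) from by ring, abs_mul,
      abs_two]
    exact mul_le_mul_of_nonneg_left (prod_bound hP3 he3) (by norm_num)
  have h3 := err3_sq he3
  have key : |CC p x| ≤ π^2*x^2 + (π^4*x^4*|QC p (π*x)| + (2*(p3b x*(π^6*x^6)) + π^12*x^12)) := by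
    have e1 : CC p x = π^2/((2*(p:ℝ)+1)*(2*(p:ℝ)+3))*x^2
        + (π^4*x^4*QC p (π*x) + (-(2*P3 p x*(G3 p x - P3 p x)) - (G3 p x - P3 p x)^2)) := by
      linarith [idC p x]
    rw [e1]
    have a1 := abs_add_le (π^2/((2*(p:ℝ)+1)*(2*(p:ℝ)+3))*x^2)
      (π^4*x^4*QC p (π*x) + (-(2*P3 p x*(G3 p x - P3 p x)) - (G3 p x - P3 p x)^2))
    have a2 := abs_add_le (π^4*x^4*QC p (π*x))
      (-(2*P3 p x*(G3 p x - P3 p x)) - (G3 p x - P3 p x)^2)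
    have a3 := abs_sub (-(2*P3 p x*(G3 p x - P3 p x))) ((G3 p x - P3 p x)^2)
    rw [abs_neg] at a3
    linarith
  unfold ccb
  nlinarith [key, sq_nonneg x, sq_nonneg (x*x)]

lemma tendsto_aux {f H : ℝ → ℝ} {c : ℝ}
    (hH : Tendsto H (nhdsWithin 0 (Set.Ioi 0)) (nhds 0))
    (hb : ∀ x, 0 < x → |f x - c| ≤ H x) :
    Tendsto f (nhdsWithin 0 (Set.Ioi 0)) (nhds c) := by
  have h0 : Tendsto (fun x => f x - c) (nhdsWithin 0 (Set.Ioi 0)) (nhds 0) := by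
    apply squeeze_zero_norm' _ hH
    filter_upwards [self_mem_nhdsWithin] with x hx
    simpa [Real.norm_eq_abs] using hb x hx
  simpa using h0.add_const c

lemma tendstoH {H : ℝ → ℝ} (hc : Continuous H) (h0 : H 0 = 0) :
    Tendsto H (nhdsWithin 0 (Set.Ioi 0)) (nhds 0) := by
  have := hc.tendsto 0
  rw [h0] at this
  exact this.mono_left nhdsWithin_le_nhds

lemma contQA (p : ℕ) : Continuous (fun x : ℝ => |QA p (π*x)|) := by
  unfold QA; fun_prop
lemma contQB (p : ℕ) : Continuous (fun x : ℝ => |QB p (π*x)|) := by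
  unfold QB; fun_prop
lemma contQC (p : ℕ) : Continuous (fun x : ℝ => |QC p (π*x)|) := by
  unfold QC; fun_prop

lemma tendstoHA (p : ℕ) : Tendsto (HA p) (nhdsWithin 0 (Set.Ioi 0)) (nhds 0) := by
  apply tendstoH
  · show Continuous fun x => HA p x
    simp only [HA, p3b, q4, QA]
    fun_prop
  · unfold HA; norm_num

lemma tendstoHB (p : ℕ) : Tendsto (HB p) (nhdsWithin 0 (Set.Ioi 0)) (nhds 0) := by
  apply tendstoH
  · show Continuous fun x => HB p x
    unfold HB ccb
    unfold p3b q4 p5b QB QC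
    fun_prop
  · unfold HB; norm_num

lemma tendstoHC (p : ℕ) : Tendsto (HC p) (nhdsWithin 0 (Set.Ioi 0)) (nhds 0) := by
  apply tendstoH
  · show Continuous fun x => HC p x
    simp only [HC, p3b, QC]
    fun_prop
  · unfold HC; norm_num

end LinRep3

open Real Filter Set intervalIntegral

namespace LinRep3
open LinRep LinRep2

lemma LA (p : ℕ) : Tendsto (fun x => AA p x / x^4) (nhdsWithin 0 (Set.Ioi 0))
    (nhds (π^4/((2*(p:ℝ)+1)*(2*(p:ℝ)+3)^3*(2*(p:ℝ)+5)))) := by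
  apply tendsto_aux (tendstoHA p)
  intro x hx
  have hp := hp0 p
  have he3 := G3_bound p hx
  have he4 := G4_bound p hx
  have hP3 := P3_abs p x
  have hP4 := P4_abs p hx
  have hx4 : (0:ℝ) < x^4 := by positivity
  have hrw : AA p x / x^4 - π^4/((2*(p:ℝ)+1)*(2*(p:ℝ)+3)^3*(2*(p:ℝ)+5))
      = (AA p x - π^4/((2*(p:ℝ)+1)*(2*(p:ℝ)+3)^3*(2*(p:ℝ)+5))*x^4) / x^4 := by
    field_simp
  rw [hrw, abs_div, abs_of_pos hx4, div_le_iff₀ hx4, idA p x]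
  have b1 : |π^6*x^6*QA p (π*x)| ≤ π^6*x^6*|QA p (π*x)| := by
    rw [abs_mul, abs_of_nonneg (by positivity : (0:ℝ) ≤ π^6*x^6)]
  have i1 : |2*P3 p x*(G3 p x - P3 p x)| ≤ 2*(p3b x*(π^6*x^6)) := by
    rw [show 2*P3 p x*(G3 p x - P3 p x) = 2*(P3 p x*(G3 p x - P3 p x)) from by ring, abs_mul,
      abs_two]
    exact mul_le_mul_of_nonneg_left (prod_bound hP3 he3) (by norm_num)
  have i2 : |(G3 p x - P3 p x)^2| ≤ (π^6*x^6)^2 := by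
    rw [abs_pow]; exact pow_le_pow_left₀ (abs_nonneg _) he3 2
  have b2 : |(-(1/(2*(p:ℝ)+3)))*(2*P3 p x*(G3 p x - P3 p x) + (G3 p x - P3 p x)^2)|
      ≤ 1*(2*(p3b x*(π^6*x^6)) + (π^6*x^6)^2) := by
    apply prod_bound
    · rw [abs_neg]; exact one_div_le_one _ (by linarith)
    · exact (abs_add_le _ _).trans (by linarith)
  have j1 : |2*P4 p x*(G4 p x - P4 p x)| ≤ 2*((x*q4 x)*(π^5*x^5)) := by
    rw [show 2*P4 p x*(G4 p x - P4 p x) = 2*(P4 p x*(G4 p x - P4 p x)) from by ring, abs_mul,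
      abs_two]
    exact mul_le_mul_of_nonneg_left (prod_bound hP4 he4) (by norm_num)
  have j2 : |(G4 p x - P4 p x)^2| ≤ (π^5*x^5)^2 := by
    rw [abs_pow]; exact pow_le_pow_left₀ (abs_nonneg _) he4 2
  have b3 : |(-(1/(2*(p:ℝ)+1)))*(2*P4 p x*(G4 p x - P4 p x) + (G4 p x - P4 p x)^2)|
      ≤ 1*(2*((x*q4 x)*(π^5*x^5)) + (π^5*x^5)^2) := by
    apply prod_bound
    · rw [abs_neg]; exact one_div_le_one _ (by linarith)
    · exact (abs_add_le _ _).trans (by linarith)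
  calc |_ + _ + _| ≤ π^6*x^6*|QA p (π*x)| + 1*(2*(p3b x*(π^6*x^6)) + (π^6*x^6)^2)
        + 1*(2*((x*q4 x)*(π^5*x^5)) + (π^5*x^5)^2) := abs_le3 b1 b2 b3
    _ = HA p x * x^4 := by unfold HA; ring

lemma LC (p : ℕ) : Tendsto (fun x => CC p x / x^2) (nhdsWithin 0 (Set.Ioi 0))
    (nhds (π^2/((2*(p:ℝ)+1)*(2*(p:ℝ)+3)))) := by
  apply tendsto_aux (tendstoHC p)
  intro x hx
  have hp := hp0 p
  have he3 := G3_bound p hx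
  have hP3 := P3_abs p x
  have hx2 : (0:ℝ) < x^2 := by positivity
  have hrw : CC p x / x^2 - π^2/((2*(p:ℝ)+1)*(2*(p:ℝ)+3))
      = (CC p x - π^2/((2*(p:ℝ)+1)*(2*(p:ℝ)+3))*x^2) / x^2 := by
    field_simp
  rw [hrw, abs_div, abs_of_pos hx2, div_le_iff₀ hx2, idC p x]
  have b1 : |π^4*x^4*QC p (π*x)| ≤ π^4*x^4*|QC p (π*x)| := by
    rw [abs_mul, abs_of_nonneg (by positivity : (0:ℝ) ≤ π^4*x^4)]
  have i1 : |2*P3 p x*(G3 p x - P3 p x)| ≤ 2*(p3b x*(π^6*x^6)) := by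
    rw [show 2*P3 p x*(G3 p x - P3 p x) = 2*(P3 p x*(G3 p x - P3 p x)) from by ring, abs_mul,
      abs_two]
    exact mul_le_mul_of_nonneg_left (prod_bound hP3 he3) (by norm_num)
  have i2 : |(G3 p x - P3 p x)^2| ≤ (π^6*x^6)^2 := by
    rw [abs_pow]; exact pow_le_pow_left₀ (abs_nonneg _) he3 2
  have b2 : |(-(2*P3 p x*(G3 p x - P3 p x)) - (G3 p x - P3 p x)^2)|
      ≤ 2*(p3b x*(π^6*x^6)) + (π^6*x^6)^2 := by
    have := abs_sub (-(2*P3 p x*(G3 p x - P3 p x))) ((G3 p x - P3 p x)^2)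
    rw [abs_neg] at this
    linarith
  calc |_ + _| ≤ π^4*x^4*|QC p (π*x)| + (2*(p3b x*(π^6*x^6)) + (π^6*x^6)^2) := by
        have := abs_add_le (π^4*x^4*QC p (π*x))
          (-(2*P3 p x*(G3 p x - P3 p x)) - (G3 p x - P3 p x)^2)
        linarith
    _ = HC p x * x^2 := by unfold HC; ring

lemma LB (p : ℕ) : Tendsto (fun x => BB p x / x^4) (nhdsWithin 0 (Set.Ioi 0))
    (nhds (-(π^4/((2*(p:ℝ)+1)*(2*(p:ℝ)+3)^3*(2*(p:ℝ)+5))))) := by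
  apply tendsto_aux (tendstoHB p)
  intro x hx
  have hp := hp0 p
  have he3 := G3_bound p hx
  have he4 := G4_bound p hx
  have he5 := G5_bound p hx
  have hP3 := P3_abs p x
  have hP4 := P4_abs p hx
  have hP5 := P5_abs p x
  have hCC := CC_abs p hx
  have hx4 : (0:ℝ) < x^4 := by positivity
  have hrw : BB p x / x^4 - (-(π^4/((2*(p:ℝ)+1)*(2*(p:ℝ)+3)^3*(2*(p:ℝ)+5))))
      = (BB p x + π^4/((2*(p:ℝ)+1)*(2*(p:ℝ)+3)^3*(2*(p:ℝ)+5))*x^4) / x^4 := by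
    field_simp
    ring
  rw [hrw, abs_div, abs_of_pos hx4, div_le_iff₀ hx4, idB p x]
  have b1 : |π^6*x^6*QB p (π*x)| ≤ π^6*x^6*|QB p (π*x)| := by
    rw [abs_mul, abs_of_nonneg (by positivity : (0:ℝ) ≤ π^6*x^6)]
  have b2 : |(G5 p x - P5 p x)*CC p x| ≤ (π^4*x^4)*(x^2*ccb p x) := prod_bound he5 hCC
  have i1 : |2*P3 p x*(G3 p x - P3 p x)| ≤ 2*(p3b x*(π^6*x^6)) := by
    rw [show 2*P3 p x*(G3 p x - P3 p x) = 2*(P3 p x*(G3 p x - P3 p x)) from by ring, abs_mul,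
      abs_two]
    exact mul_le_mul_of_nonneg_left (prod_bound hP3 he3) (by norm_num)
  have i2 : |(G3 p x - P3 p x)^2| ≤ (π^6*x^6)^2 := by
    rw [abs_pow]; exact pow_le_pow_left₀ (abs_nonneg _) he3 2
  have b3 : |P5 p x*(-(2*P3 p x*(G3 p x - P3 p x)) - (G3 p x - P3 p x)^2)|
      ≤ p5b x*(2*(p3b x*(π^6*x^6)) + (π^6*x^6)^2) := by
    apply prod_bound hP5
    have := abs_sub (-(2*P3 p x*(G3 p x - P3 p x))) ((G3 p x - P3 p x)^2)
    rw [abs_neg] at this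
    linarith
  have j1 : |2*P4 p x*(G4 p x - P4 p x)| ≤ 2*((x*q4 x)*(π^5*x^5)) := by
    rw [show 2*P4 p x*(G4 p x - P4 p x) = 2*(P4 p x*(G4 p x - P4 p x)) from by ring, abs_mul,
      abs_two]
    exact mul_le_mul_of_nonneg_left (prod_bound hP4 he4) (by norm_num)
  have j2 : |(G4 p x - P4 p x)^2| ≤ (π^5*x^5)^2 := by
    rw [abs_pow]; exact pow_le_pow_left₀ (abs_nonneg _) he4 2
  have b4 : |P3 p x*(2*P4 p x*(G4 p x - P4 p x) + (G4 p x - P4 p x)^2)|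
      ≤ p3b x*(2*((x*q4 x)*(π^5*x^5)) + (π^5*x^5)^2) := by
    apply prod_bound hP3
    exact (abs_add_le _ _).trans (by linarith)
  have b5 : |(G3 p x - P3 p x)*(P4 p x + (G4 p x - P4 p x))^2|
      ≤ (π^6*x^6)*((x*q4 x + π^5*x^5))^2 := by
    apply prod_bound he3
    rw [abs_pow]
    apply pow_le_pow_left₀ (abs_nonneg _)
    exact (abs_add_le _ _).trans (by linarith)
  calc |_ + _ + _ - _ - _| ≤ π^6*x^6*|QB p (π*x)| + (π^4*x^4)*(x^2*ccb p x)
        + p5b x*(2*(p3b x*(π^6*x^6)) + (π^6*x^6)^2)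
        + p3b x*(2*((x*q4 x)*(π^5*x^5)) + (π^5*x^5)^2)
        + (π^6*x^6)*((x*q4 x + π^5*x^5))^2 := abs_le5 b1 b2 b3 b4 b5
    _ = HB p x * x^4 := by unfold HB; ring

end LinRep3

open Real Filter Set intervalIntegral

namespace LinRep3
open LinRep LinRep2

lemma final_abstract {A B C : ℝ → ℝ} {α γ : ℝ} (hα : 0 < α) (hγ : 0 < γ)
    (hLA : Tendsto (fun x => A x/x^4) (nhdsWithin 0 (Set.Ioi 0)) (nhds α))
    (hLB : Tendsto (fun x => B x/x^4) (nhdsWithin 0 (Set.Ioi 0)) (nhds (-α)))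
    (hLC : Tendsto (fun x => C x/x^2) (nhdsWithin 0 (Set.Ioi 0)) (nhds γ)) :
    Tendsto (fun x => ((B x * Real.arcsin (B x / A x) + Real.sqrt (A x^2 - B x^2))
        / C x ^ ((3:ℝ)/2)) / x) (nhdsWithin 0 (Set.Ioi 0))
      (nhds (α * (π/2) / γ ^ ((3:ℝ)/2))) := by
  have hxpos : ∀ᶠ x in nhdsWithin (0:ℝ) (Set.Ioi 0), 0 < x := by
    filter_upwards [self_mem_nhdsWithin] with x hx
    exact hx
  have hApos : ∀ᶠ x in nhdsWithin (0:ℝ) (Set.Ioi 0), 0 < A x := by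
    have h2 := hLA.eventually (eventually_gt_nhds (by linarith : α/2 < α))
    filter_upwards [h2, hxpos] with x h hx
    have hx4 : (0:ℝ) < x^4 := by positivity
    have e : A x/x^4*x^4 = A x := div_mul_cancel₀ _ (ne_of_gt hx4)
    nlinarith [mul_lt_mul_of_pos_right h hx4]
  have hCpos : ∀ᶠ x in nhdsWithin (0:ℝ) (Set.Ioi 0), 0 < C x := by
    have h2 := hLC.eventually (eventually_gt_nhds (by linarith : γ/2 < γ))
    filter_upwards [h2, hxpos] with x h hx
    have hx2 : (0:ℝ) < x^2 := by positivity
    have e : C x/x^2*x^2 = C x := div_mul_cancel₀ _ (ne_of_gt hx2)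
    nlinarith [mul_lt_mul_of_pos_right h hx2]
  have L3 : Tendsto (fun x => B x / A x) (nhdsWithin 0 (Set.Ioi 0)) (nhds (-1)) := by
    have h := hLB.div hLA hα.ne'
    have hval : -α/α = -1 := by field_simp
    rw [hval] at h
    apply h.congr'
    filter_upwards [hApos, hxpos] with x hAx hx
    have hx4 : (x:ℝ)^4 ≠ 0 := by positivity
    simp only [Pi.div_apply]
    field_simp
  have L4 : Tendsto (fun x => Real.arcsin (B x / A x)) (nhdsWithin 0 (Set.Ioi 0))
      (nhds (-(π/2))) := by
    have := (Real.continuous_arcsin.tendsto (-1)).comp L3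
    rwa [Real.arcsin_neg_one] at this
  have L5 : Tendsto (fun x => (C x/x^2) ^ ((3:ℝ)/2)) (nhdsWithin 0 (Set.Ioi 0))
      (nhds (γ ^ ((3:ℝ)/2))) := hLC.rpow_const (Or.inl hγ.ne')
  have hγ32 : 0 < γ ^ ((3:ℝ)/2) := Real.rpow_pos_of_pos hγ _
  have L6 : Tendsto (fun x => Real.sqrt ((A x/x^4 - B x/x^4) * (A x/x^4 + B x/x^4)))
      (nhdsWithin 0 (Set.Ioi 0)) (nhds 0) := by
    have h := (hLA.sub hLB).mul (hLA.add hLB)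
    have h2 := (Real.continuous_sqrt.tendsto ((α - -α) * (α + -α))).comp h
    rw [show (α - -α) * (α + -α) = 0 from by ring, Real.sqrt_zero] at h2
    exact h2
  have hmain := ((hLB.mul L4).div L5 hγ32.ne').add (L6.div L5 hγ32.ne')
  rw [show -α * -(π/2) / γ ^ ((3:ℝ)/2) + 0 / γ ^ ((3:ℝ)/2) = α * (π/2) / γ ^ ((3:ℝ)/2) from by
    ring] at hmain
  apply hmain.congr'
  filter_upwards [hApos, hCpos, hxpos] with x hAx hCx hx
  have hx2 : (0:ℝ) < x^2 := by positivity
  have hx3 : (0:ℝ) < x^3 := by positivity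
  have hx4 : (0:ℝ) < x^4 := by positivity
  have hC32 : (C x/x^2) ^ ((3:ℝ)/2) = C x ^ ((3:ℝ)/2) / x^3 := by
    rw [Real.div_rpow hCx.le (by positivity : (0:ℝ) ≤ x^2)]
    congr 1
    rw [← Real.rpow_natCast x 2, ← Real.rpow_mul hx.le,
      show ((2:ℕ):ℝ)*((3:ℝ)/2) = ((3:ℕ):ℝ) from by norm_num, Real.rpow_natCast]
  have hsq : Real.sqrt ((A x/x^4 - B x/x^4) * (A x/x^4 + B x/x^4))
      = Real.sqrt (A x^2 - B x^2) / x^4 := by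
    have e : (A x/x^4 - B x/x^4)*(A x/x^4 + B x/x^4) = (A x^2 - B x^2) * ((x^4)⁻¹)^2 := by
      field_simp
      ring
    rw [e, Real.sqrt_mul' _ (by positivity : (0:ℝ) ≤ ((x^4)⁻¹)^2),
      Real.sqrt_sq (by positivity : (0:ℝ) ≤ (x^4)⁻¹), div_eq_mul_inv]
  have hw : C x ^ ((3:ℝ)/2) ≠ 0 := (Real.rpow_pos_of_pos hCx _).ne'
  simp only [Pi.div_apply]
  rw [hC32, hsq]
  field_simp

lemma value_eq (p : ℕ) :
    π^4/((2*(p:ℝ)+1)*(2*(p:ℝ)+3)^3*(2*(p:ℝ)+5)) * (π/2)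
        / (π^2/((2*(p:ℝ)+1)*(2*(p:ℝ)+3))) ^ ((3:ℝ)/2)
    = π^2 * Real.sqrt (4*(p:ℝ)^2 + 8*(p:ℝ) + 3) / (2*(2*(p:ℝ)+3)^2*(2*(p:ℝ)+5)) := by
  have hp := hp0 p
  have hab : (0:ℝ) < (2*(p:ℝ)+1)*(2*(p:ℝ)+3) := by positivity
  set s := Real.sqrt ((2*(p:ℝ)+1)*(2*(p:ℝ)+3)) with hsdef
  have hs : 0 < s := Real.sqrt_pos.mpr hab
  have hs2 : s^2 = (2*(p:ℝ)+1)*(2*(p:ℝ)+3) := Real.sq_sqrt hab.le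
  have hsq : Real.sqrt (4*(p:ℝ)^2 + 8*(p:ℝ) + 3) = s := by
    rw [show (4*(p:ℝ)^2 + 8*(p:ℝ) + 3) = (2*(p:ℝ)+1)*(2*(p:ℝ)+3) from by ring]
  have hγs : π^2/((2*(p:ℝ)+1)*(2*(p:ℝ)+3)) = (π/s)^2 := by rw [div_pow, hs2]
  have h32 : ((π/s)^2 : ℝ) ^ ((3:ℝ)/2) = (π/s)^3 := by
    have h0 : (0:ℝ) ≤ π/s := by positivity
    rw [← Real.rpow_natCast (π/s) 2, ← Real.rpow_natCast (π/s) 3, ← Real.rpow_mul h0]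
    norm_num
  rw [hγs, h32, hsq]
  have h1 : (2*(p:ℝ)+1) ≠ 0 := by positivity
  have h3 : (2*(p:ℝ)+3) ≠ 0 := by positivity
  have h5 : (2*(p:ℝ)+5) ≠ 0 := by positivity
  have e1 : π^4/((2*(p:ℝ)+1)*(2*(p:ℝ)+3)^3*(2*(p:ℝ)+5)) * (π/2) / ((π/s)^3)
      = π^2*(s^3/((2*(p:ℝ)+1)*(2*(p:ℝ)+3)))/(2*(2*(p:ℝ)+3)^2*(2*(p:ℝ)+5)) := by
    field_simp
  have hs3 : s^3 = s*((2*(p:ℝ)+1)*(2*(p:ℝ)+3)) := by rw [← hs2]; ring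
  rw [e1, hs3, mul_div_cancel_right₀ s hab.ne']

theorem main (p : ℕ) :
    Tendsto (fun x => ((BB p x * Real.arcsin (BB p x / AA p x)
        + Real.sqrt (AA p x^2 - BB p x^2)) / CC p x ^ ((3:ℝ)/2)) / x)
      (nhdsWithin 0 (Set.Ioi 0))
      (nhds (π^2 * Real.sqrt (4*(p:ℝ)^2 + 8*(p:ℝ) + 3) / (2*(2*(p:ℝ)+3)^2*(2*(p:ℝ)+5)))) := by
  have hp := hp0 p
  have hα : (0:ℝ) < π^4/((2*(p:ℝ)+1)*(2*(p:ℝ)+3)^3*(2*(p:ℝ)+5)) := by positivity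
  have hγ : (0:ℝ) < π^2/((2*(p:ℝ)+1)*(2*(p:ℝ)+3)) := by positivity
  have h := final_abstract hα hγ (LA p) (LB p) (LC p)
  rwa [value_eq p] at h

end LinRep3

open Real Filter intervalIntegral

theorem linear_repulsion (p : ℕ) :
    Tendsto (fun x : ℝ =>
      let g1 : ℝ := 1 / (2 * (p : ℝ) + 1)
      let g2 : ℝ := 1 / (2 * (p : ℝ) + 3)
      let g3 : ℝ := ∫ t in (0 : ℝ)..1, Real.cos (π * x * t) * t ^ (2 * p)
      let g4 : ℝ := ∫ t in (0 : ℝ)..1, Real.sin (π * x * t) * t ^ (2 * p + 1)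
      let g5 : ℝ := ∫ t in (0 : ℝ)..1, Real.cos (π * x * t) * t ^ (2 * p + 2)
      let C : ℝ := g1 ^ 2 - g3 ^ 2
      let A : ℝ := g2 * C - g1 * g4 ^ 2
      let B : ℝ := g5 * C - g3 * g4 ^ 2
      ((B * Real.arcsin (B / A) + Real.sqrt (A ^ 2 - B ^ 2)) / C ^ ((3 : ℝ) / 2)) / x)
      (nhdsWithin 0 (Set.Ioi 0))
      (nhds (π ^ 2 * Real.sqrt (4 * (p : ℝ) ^ 2 + 8 * p + 3) /
        (2 * (2 * (p : ℝ) + 3) ^ 2 * (2 * p + 5)))) := by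
  exact LinRep3.main p
end
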